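/- arXiv:2505.00637 — 3 statements merged into one kernel-verified Lean document; each statement's English description precedes it below -/
import Mathlib

section
/- Let j : V → V be a nontrivial elementary embedding with critical point κ. Let δ be a cardinal whose cofinality is strictly greater than κ, let C ⊆ δ be a club in δ, and let ⟨α_ξ : ξ < cof(δ)⟩ be its increasing enumeration. If j(α_ξ) = α_ξ for all ξ < κ, then j(α_κ) > α_κ. -/
universe u

noncomputable section

open FirstOrder

/-- The membership relation symbol: a single binary relation. -/
inductive MemRel : ℕ → Type where
  | mem : MemRel 2

/-- The first-order language of set theory: one binary relation symbol, no function symbols. -/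
def Lset : Language := ⟨fun _ => Empty, MemRel⟩

/-- The structure `(V, ∈)` on the universe of ZFC sets. -/
instance : Lset.Structure ZFSet.{u} where
  funMap := fun f _ => f.elim
  RelMap := fun r v => match r with | .mem => v 0 ∈ v 1

/-- For a ZFC set `A`, the structure `(A, ∈)` on its members. -/
instance (A : ZFSet.{u}) : Lset.Structure A.toSet where
  funMap := fun f _ => f.elim
  RelMap := fun r v => match r with | .mem => (v 0 : ZFSet.{u}) ∈ (v 1 : ZFSet.{u})

/-- `j : V → V` is an elementary embedding: it preserves all first-order formulas
in the language of set theory. -/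
def IsElem (j : ZFSet.{u} → ZFSet.{u}) : Prop :=
  ∀ (n : ℕ) (φ : Lset.Formula (Fin n)) (a : Fin n → ZFSet.{u}),
    φ.Realize a ↔ φ.Realize (j ∘ a)

/-- The ordinal corresponding to an element of `o.ToType`. -/
def otypein (o : Ordinal.{u}) (i : o.ToType) : Ordinal.{u} :=
  @Ordinal.typein o.ToType (· < ·) isWellOrder_lt i

theorem otypein_lt_self (o : Ordinal.{u}) (i : o.ToType) : otypein o i < o :=
  Ordinal.typein_lt_self i

/-- The von Neumann ordinal associated to an ordinal. -/
def ordz (o : Ordinal.{u}) : ZFSet.{u} :=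
  ZFSet.range.{u,u} fun i : o.ToType => ordz (otypein o i)
termination_by o
decreasing_by exact otypein_lt_self o i

/-- The cumulative hierarchy: `Vset δ` is the set of all sets of rank `< δ`. -/
def Vset (o : Ordinal.{u}) : ZFSet.{u} :=
  ZFSet.sUnion
    (ZFSet.range.{u,u} fun i : o.ToType =>
      ZFSet.powerset (Vset (otypein o i)))
termination_by o
decreasing_by exact otypein_lt_self o i

/-- Application of a set-coded function (a set of Kuratowski pairs) to an argument. -/
def fval (f x : ZFSet.{u}) : ZFSet.{u} :=
  @dite _ (∃ y, ZFSet.pair x y ∈ f) (Classical.dec _) (fun h => h.choose) (fun _ => ∅)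

/-- The critical point of `j : V → V`: the least ordinal `α` with `j α > α`. -/
def crit (j : ZFSet.{u} → ZFSet.{u}) : Ordinal.{u} :=
  sInf {α | ordz α ∈ j (ordz α)}

/-- The critical sequence of `j`: `κ₀ = crit j`, `κ_{n+1} = j κ_n`. -/
def critSeq (j : ZFSet.{u} → ZFSet.{u}) : ℕ → Ordinal.{u}
  | 0 => crit j
  | n + 1 => (j (ordz (critSeq j n))).rank

/-- `lam j` is the supremum of the critical sequence of `j`. -/
def lam (j : ZFSet.{u} → ZFSet.{u}) : Ordinal.{u} := ⨆ n, critSeq j n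

/-- The graph of `f` restricted to `A`, as a set of Kuratowski pairs: `f ↾ A`. -/
def graphOn (f : ZFSet.{u} → ZFSet.{u}) (A : ZFSet.{u}) : ZFSet.{u} :=
  @ZFSet.map f (Classical.allZFSetDefinable _) A

/-- The restriction of a set-coded function `l` (a set of pairs) to domain `A`: `l ↾ A`. -/
def restrictGraph (l A : ZFSet.{u}) : ZFSet.{u} :=
  ZFSet.sep (fun p => ∃ x ∈ A, ∃ y, p = ZFSet.pair x y) l

/-- The application `k[l] = ⋃_{α<δ} k(l ↾ V_α)` of one set-coded embedding of `V_δ`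
to another. -/
def appE (δ : Ordinal.{u}) (k l : ZFSet.{u}) : ZFSet.{u} :=
  ZFSet.sUnion
    (ZFSet.range.{u,u} fun i : δ.ToType =>
      fval k (restrictGraph l (Vset (otypein δ i))))

/-- `k` is a set coding a nontrivial elementary embedding of `(A, ∈)` into itself:
`k` is the graph of a function `F : A → A` which preserves all first-order formulas
of the language of set theory and is not the identity. -/
def IsNontrivEE (A k : ZFSet.{u}) : Prop :=
  ∃ F : A.toSet → A.toSet,
    (∀ p : ZFSet.{u}, p ∈ k ↔ ∃ x : A.toSet, p = ZFSet.pair x (F x)) ∧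
    (∀ (n : ℕ) (φ : Lset.Formula (Fin n)) (a : Fin n → A.toSet),
      φ.Realize a ↔ φ.Realize (F ∘ a)) ∧
    F ≠ id

/-- `Eset δ` is `E_δ`, the set of all (set-coded) nontrivial elementary embeddings
of `V_δ` into itself. -/
def Eset (δ : Ordinal.{u}) : ZFSet.{u} :=
  ZFSet.sep (fun k => IsNontrivEE (Vset δ) k)
    (ZFSet.powerset (ZFSet.powerset (ZFSet.powerset (Vset δ))))

/-- The critical point of a set-coded embedding: the least ordinal `α` with `k(α) > α`. -/
def critE (k : ZFSet.{u}) : Ordinal.{u} :=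
  sInf {α | ordz α ∈ fval k (ordz α)}

/-- The critical sequence of a set-coded embedding `k`, as von Neumann ordinals:
`γ₀ = crit k` and `γ_{n+1} = k(γ_n)`. -/
def critSeqE (k : ZFSet.{u}) : ℕ → ZFSet.{u}
  | 0 => ordz (critE k)
  | n + 1 => fval k (critSeqE k n)

/-- The iterates of a set-coded embedding: `k₁ = k`, `k_{n+1} = k_n[k_n]`
(here `iterE δ k n` is `k_{n+1}`). -/
def iterE (δ : Ordinal.{u}) (k : ZFSet.{u}) : ℕ → ZFSet.{u}
  | 0 => k
  | n + 1 => appE δ (iterE δ k n) (iterE δ k n)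

/-- `I(k) = {k_n : n ≥ 1}`. -/
def Iset (δ : Ordinal.{u}) (k : ZFSet.{u}) : ZFSet.{u} :=
  ZFSet.range.{u,u} fun n : ULift.{u} ℕ => iterE δ k n.down

/-- `R(k) = {l ∈ E_δ : l[l] = k}`, the set of roots of `k`. -/
def Rset (δ : Ordinal.{u}) (k : ZFSet.{u}) : ZFSet.{u} :=
  ZFSet.sep (fun l => appE δ l l = k) (Eset δ)

/-- `R^γ(k) = {l ∈ R(k) : l(γ) = γ}`. -/
def Rγset (δ : Ordinal.{u}) (γ : Ordinal.{u}) (k : ZFSet.{u}) : ZFSet.{u} :=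
  ZFSet.sep (fun l => fval l (ordz γ) = ordz γ) (Rset δ k)

/-- The approximations to `A(k)`: `A₀ = I(k)`, `A_{n+1} = A_n ∪ ⋃_{l ∈ A_n} R(l)`. -/
def AsetAux (δ : Ordinal.{u}) (k : ZFSet.{u}) : ℕ → ZFSet.{u}
  | 0 => Iset δ k
  | n + 1 => AsetAux δ k n ∪
      ZFSet.sUnion
        (@ZFSet.image (fun l => Rset δ l) (Classical.allZFSetDefinable _) (AsetAux δ k n))

/-- `A(k) = ⋃_n A_n`, the smallest set containing `k` closed under squares and roots. -/
def Aset (δ : Ordinal.{u}) (k : ZFSet.{u}) : ZFSet.{u} :=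
  ZFSet.sUnion (ZFSet.range.{u,u} fun n : ULift.{u} ℕ => AsetAux δ k n.down)

/-- `f` restricts to an elementary embedding of `(A, ∈)` into `(B, ∈)`: it maps `A` into `B`
and preserves all first-order formulas of the language of set theory. -/
def IsElemFun (A B : ZFSet.{u}) (f : ZFSet.{u} → ZFSet.{u}) : Prop :=
  ∃ h : ∀ x ∈ A, f x ∈ B,
    ∀ (n : ℕ) (φ : Lset.Formula (Fin n)) (a : Fin n → A.toSet),
      φ.Realize a ↔ φ.Realize fun i => (⟨f (a i), h _ (a i).2⟩ : B.toSet)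

/-- `η` is `(γ, ν, x)`-almost supercompact: there are `ν̄ < η` (with `γ < ν̄`), `x̄ ∈ V_ν̄`
and an elementary embedding `k : V_ν̄ → V_ν` with `k(γ) = γ` and `k(x̄) = x`. -/
def IsASC (η γ ν : Ordinal.{u}) (x : ZFSet.{u}) : Prop :=
  ∃ nu' : Ordinal.{u}, γ < nu' ∧ nu' < η ∧ ∃ x' ∈ Vset nu', ∃ f : ZFSet.{u} → ZFSet.{u},
    IsElemFun (Vset nu') (Vset ν) f ∧ f (ordz γ) = ordz γ ∧ f x' = x

/-- `η` is `< μ`-almost supercompact. -/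
def ASbelow (η μ : Ordinal.{u}) : Prop :=
  ∀ (γ ν : Ordinal.{u}) (x : ZFSet.{u}), γ < η → η < ν → ν < μ → x ∈ Vset ν → IsASC η γ ν x

/-- `η` is almost supercompact. -/
def IsAlmostSC (η : Ordinal.{u}) : Prop := ∀ μ > η, ASbelow η μ

/-- `X` is a `(j, δ)`-small set: `j(δ) = δ`, `X ⊆ E_δ`, `j ↾ V_δ ∈ j(X)` and for every
`ξ < δ`, `sup {k(ξ) : k ∈ X} < δ`. -/
def IsSmallSet (j : ZFSet.{u} → ZFSet.{u}) (δ : Ordinal.{u}) (X : ZFSet.{u}) : Prop :=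
  j (ordz δ) = ordz δ ∧ X ⊆ Eset δ ∧ graphOn j (Vset δ) ∈ j X ∧
    ∀ ξ < δ, ∃ β < δ, ∀ k ∈ X, fval k (ordz ξ) ⊆ ordz β

/-- `C` is a club in `δ`: a subset of `δ` unbounded in `δ` and closed under suprema of
its bounded nonempty subsets. -/
def IsClubIn (C : Set Ordinal.{u}) (δ : Ordinal.{u}) : Prop :=
  C ⊆ Set.Iio δ ∧ (∀ α < δ, ∃ β ∈ C, α < β) ∧
    ∀ S ⊆ C, S.Nonempty → sSup S < δ → sSup S ∈ C

/-- The application `k[l] = ⋃_{α ∈ Ord} k(l ↾ V_α)` of one elementary embedding of `V` to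
another, as a class function: its value at `x` is `k(l ↾ V_{rank x + 1})(x)`. -/
def appC (k l : ZFSet.{u} → ZFSet.{u}) : ZFSet.{u} → ZFSet.{u} := fun x =>
  fval (k (graphOn l (Vset (x.rank + 1)))) x

/-- The iterates of `j : V → V`: `j₁ = j` and `j_{n+1} = j_n[j_n]`
(here `jIter j n` is `j_{n+1}`). -/
def jIter (j : ZFSet.{u} → ZFSet.{u}) : ℕ → ZFSet.{u} → ZFSet.{u}
  | 0 => j
  | n + 1 => appC (jIter j n) (jIter j n)

-- Part A : ordz theory
namespace Statement0
open ZFSet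

theorem mem_wf_3cycle : ∀ (c a b : ZFSet.{u}), a ∈ b → b ∈ c → c ∈ a → False := fun c =>
  ZFSet.mem_wf.induction
    (C := fun c => ∀ a b : ZFSet.{u}, a ∈ b → b ∈ c → c ∈ a → False) c
    (fun c IH a b hab hbc hca => IH b hbc c a hca hab hbc)

theorem mem_ordz {x : ZFSet.{u}} {o : Ordinal.{u}} : x ∈ ordz o ↔ ∃ β < o, x = ordz β := by
  rw [ordz, ZFSet.mem_range]
  constructor
  · rintro ⟨i, rfl⟩; exact ⟨otypein o i, otypein_lt_self o i, rfl⟩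
  · rintro ⟨β, hβ, rfl⟩
    obtain ⟨i, hi⟩ := @Ordinal.typein_surj o.ToType (· < ·) isWellOrder_lt β
      (by rwa [Ordinal.type_toType])
    exact ⟨i, congrArg ordz hi⟩

theorem ordz_mem_ordz_of_lt {α β : Ordinal.{u}} (h : α < β) : ordz α ∈ ordz β :=
  mem_ordz.2 ⟨α, h, rfl⟩

theorem rank_ordz (o : Ordinal.{u}) : (ordz o).rank = o := by
  induction o using Ordinal.induction with
  | h o IH =>
    rw [ordz, ZFSet.rank_range]
    have : (fun i : o.ToType => Order.succ (ordz (otypein o i)).rank) =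
        fun i => Order.succ (otypein o i) := by
      funext i; rw [IH _ (otypein_lt_self o i)]
    rw [this]
    exact Ordinal.lsub_typein _

theorem ordz_injective : Function.Injective ordz.{u} := by
  intro α β h
  by_contra hne
  rcases lt_or_gt_of_ne hne with hlt | hlt
  · exact ZFSet.mem_irrefl _ (h ▸ ordz_mem_ordz_of_lt hlt)
  · exact ZFSet.mem_irrefl _ (h ▸ ordz_mem_ordz_of_lt hlt)

theorem ordz_mem_ordz {α β : Ordinal.{u}} : ordz α ∈ ordz β ↔ α < β := by
  refine ⟨fun h => ?_, ordz_mem_ordz_of_lt⟩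
  obtain ⟨γ, hγ, hx⟩ := mem_ordz.1 h
  rwa [← ordz_injective hx] at hγ

theorem ordz_zero : ordz (0 : Ordinal.{u}) = ∅ := by
  apply ZFSet.ext; intro z
  simp only [ZFSet.notMem_empty, iff_false]
  intro hz
  obtain ⟨β, hβ, _⟩ := mem_ordz.1 hz
  exact absurd hβ (not_lt_of_ge (zero_le (a := β)))

theorem ordz_succ (α : Ordinal.{u}) : ordz (α + 1) = insert (ordz α) (ordz α) := by
  apply ZFSet.ext; intro z
  rw [mem_ordz, ZFSet.mem_insert_iff]
  constructor
  · rintro ⟨β, hβ, rfl⟩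
    rcases lt_or_eq_of_le (Order.lt_succ_iff.1 hβ) with h | h
    · exact Or.inr (ordz_mem_ordz_of_lt h)
    · exact Or.inl (by rw [h])
  · rintro (rfl | hz)
    · exact ⟨α, Order.lt_succ_of_le le_rfl, rfl⟩
    · obtain ⟨β, hβ, rfl⟩ := mem_ordz.1 hz
      exact ⟨β, hβ.trans (Order.lt_succ_of_le le_rfl), rfl⟩

/-- von Neumann ordinal predicate: transitive and ∈-trichotomous. -/
def IsVN (x : ZFSet.{u}) : Prop :=
  (∀ y ∈ x, ∀ z ∈ y, z ∈ x) ∧ (∀ y ∈ x, ∀ z ∈ x, y ∈ z ∨ y = z ∨ z ∈ y)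

theorem isVN_ordz (o : Ordinal.{u}) : IsVN (ordz o) := by
  constructor
  · intro y hy z hz
    obtain ⟨β, hβ, rfl⟩ := mem_ordz.1 hy
    obtain ⟨γ, hγ, rfl⟩ := mem_ordz.1 hz
    exact ordz_mem_ordz_of_lt ((ordz_mem_ordz.1 hz).trans hβ)
  · intro y hy z hz
    obtain ⟨β, hβ, rfl⟩ := mem_ordz.1 hy
    obtain ⟨γ, hγ, rfl⟩ := mem_ordz.1 hz
    rcases lt_trichotomy β γ with h | h | h
    · exact Or.inl (ordz_mem_ordz_of_lt h)
    · exact Or.inr (Or.inl (by rw [h]))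
    · exact Or.inr (Or.inr (ordz_mem_ordz_of_lt h))

theorem isVN_exists_ordz : ∀ x : ZFSet.{u}, IsVN x → ∃ α, x = ordz α := fun x =>
  ZFSet.mem_wf.induction (C := fun x => IsVN x → ∃ α, x = ordz α) x (fun x IH hx => by
    -- every member of x is a vN ordinal
    have hmem : ∀ y ∈ x, ∃ α, y = ordz α := by
      intro y hy
      apply IH y hy
      constructor
      · intro z hz w hw
        have hzx : z ∈ x := hx.1 y hy z hz
        have hwx : w ∈ x := hx.1 z hzx w hw
        rcases hx.2 w hwx y hy with h | h | h
        · exact h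
        · exact absurd hz (h ▸ ZFSet.mem_asymm hw)
        · exact (mem_wf_3cycle y w z hw hz h).elim
      · intro z hz w hw
        exact hx.2 z (hx.1 y hy z hz) w (hx.1 y hy w hw)
    set A : Set Ordinal.{u} := {β | ordz β ∈ x} with hA
    have hdc : ∀ β ∈ A, ∀ γ < β, γ ∈ A := by
      intro β hβ γ hγ
      exact hx.1 _ hβ _ (ordz_mem_ordz_of_lt hγ)
    have hnotall : (rank x) ∉ A := by
      intro h
      exact absurd (rank_ordz (rank x) ▸ ZFSet.rank_lt_of_mem h) (lt_irrefl _)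
    set α := sInf {γ | γ ∉ A} with hα
    have hαmem : α ∈ {γ | γ ∉ A} := csInf_mem (s := {γ | γ ∉ A}) ⟨rank x, hnotall⟩
    refine ⟨α, ZFSet.ext fun z => ?_⟩
    rw [mem_ordz]
    constructor
    · intro hz
      obtain ⟨β, rfl⟩ := hmem z hz
      refine ⟨β, ?_, rfl⟩
      by_contra hge
      rcases lt_or_eq_of_le (not_lt.1 hge) with h | h
      · exact hαmem (hdc β hz α h)
      · exact hαmem (h ▸ hz)
    · rintro ⟨β, hβ, rfl⟩
      have : β ∈ A := by
        by_contra h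
        exact absurd hβ (not_lt.2 (csInf_le (OrderBot.bddBelow _) h))
      exact this)

end Statement0
namespace Statement0
open ZFSet

theorem mem_Vset : ∀ {o : Ordinal.{u}} {x : ZFSet.{u}}, x ∈ Vset o ↔ x.rank < o := by
  intro o
  induction o using Ordinal.induction with
  | h o IH =>
    intro x
    rw [Vset, ZFSet.mem_sUnion]
    constructor
    · rintro ⟨t, ht, hx⟩
      obtain ⟨i, rfl⟩ := ZFSet.mem_range.1 ht
      rw [ZFSet.mem_powerset] at hx
      have : x.rank ≤ otypein o i := ZFSet.rank_le_iff.2 fun y hy =>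
        (IH _ (otypein_lt_self o i)).1 (hx hy)
      exact lt_of_le_of_lt this (otypein_lt_self o i)
    · intro hx
      obtain ⟨i, hi⟩ := @Ordinal.typein_surj o.ToType (· < ·) isWellOrder_lt x.rank
        (by rwa [Ordinal.type_toType])
      have hio : otypein o i = x.rank := hi
      refine ⟨ZFSet.powerset (Vset (otypein o i)), ZFSet.mem_range.2 ⟨i, rfl⟩, ?_⟩
      rw [ZFSet.mem_powerset]
      intro y hy
      rw [IH _ (otypein_lt_self o i), hio]
      exact ZFSet.rank_lt_of_mem hy

end Statement0
namespace Statement0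
open FirstOrder Language ZFSet

@[simp] theorem relMap_mem (v : Fin 2 → ZFSet.{u}) :
    Structure.RelMap (L := Lset) MemRel.mem v = (v 0 ∈ v 1) := rfl

/-- membership atomic bounded formula -/
abbrev bmem {k n : ℕ} (t u : Lset.Term (Fin k ⊕ Fin n)) : Lset.BoundedFormula (Fin k) n :=
  Relations.boundedFormula₂ MemRel.mem t u

@[simp] theorem realize_bmem {k n : ℕ} (t u : Lset.Term (Fin k ⊕ Fin n))
    (v : Fin k → ZFSet.{u}) (xs : Fin n → ZFSet.{u}) :
    (bmem t u).Realize v xs ↔ t.realize (Sum.elim v xs) ∈ u.realize (Sum.elim v xs) :=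
  Iff.rfl

abbrev beq {k n : ℕ} (t u : Lset.Term (Fin k ⊕ Fin n)) : Lset.BoundedFormula (Fin k) n :=
  Term.bdEqual t u

/-- free variable -/
abbrev fv {k n : ℕ} (i : Fin k) : Lset.Term (Fin k ⊕ Fin n) := Term.var (Sum.inl i)

def memF : Lset.Formula (Fin 2) := bmem (fv 0) (fv 1)

theorem j_mem {j : ZFSet.{u} → ZFSet.{u}} (hj : IsElem j) {x y : ZFSet.{u}} :
    x ∈ y ↔ j x ∈ j y := by
  have := hj 2 memF ![x, y]
  simpa [memF, Formula.Realize] using this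

def ordF : Lset.Formula (Fin 1) :=
  (∀' ∀' (bmem (&0) (fv 0) ⟹ bmem (&1) (&0) ⟹ bmem (&1) (fv 0))) ⊓
  (∀' ∀' (bmem (&0) (fv 0) ⟹ bmem (&1) (fv 0) ⟹
      (bmem (&0) (&1) ⊔ (beq (&0) (&1) ⊔ bmem (&1) (&0)))))

theorem realize_ordF (x : ZFSet.{u}) : ordF.Realize ![x] ↔ IsVN x := by
  simp [ordF, IsVN, Formula.Realize, Fin.snoc]
  constructor
  · rintro ⟨h1, h2⟩
    exact ⟨fun y hy z hz => h1 y z hy hz, fun y hy z hz => h2 y z hy hz⟩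
  · rintro ⟨h1, h2⟩
    exact ⟨fun y z hy hz => h1 y hy z hz, fun y z hy hz => h2 y hy z hz⟩

end Statement0
namespace Statement0
open FirstOrder Language ZFSet

/-- bound variable with explicit index -/
abbrev bvT {k n : ℕ} (i : ℕ) (h : i < n := by omega) : Lset.Term (Fin k ⊕ Fin n) :=
  Term.var (Sum.inr ⟨i, h⟩)

/-- lift a term one bound-variable level -/
abbrev liftT {k n : ℕ} (t : Lset.Term (Fin k ⊕ Fin n)) : Lset.Term (Fin k ⊕ Fin (n + 1)) :=
  t.relabel (Sum.map id Fin.castSucc)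

abbrev lastV {k n : ℕ} : Lset.Term (Fin k ⊕ Fin (n + 1)) :=
  Term.var (Sum.inr (Fin.last n))

@[simp] theorem realize_liftT {k n : ℕ} (t : Lset.Term (Fin k ⊕ Fin n))
    (v : Fin k → ZFSet.{u}) (xs : Fin n → ZFSet.{u}) (z : ZFSet.{u}) :
    (liftT t).realize (Sum.elim v (Fin.snoc xs z)) = t.realize (Sum.elim v xs) := by
  rw [Term.realize_relabel]
  congr 1
  funext i
  rcases i with a | b
  · rfl
  · simp [Fin.snoc_castSucc]

@[simp] theorem realize_lastV {k n : ℕ}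
    (v : Fin k → ZFSet.{u}) (xs : Fin n → ZFSet.{u}) (z : ZFSet.{u}) :
    (lastV (k := k) (n := n)).realize (Sum.elim v (Fin.snoc xs z)) = z := by
  simp [Fin.snoc_last]

/-- `q = {a}` -/
def singF {k n : ℕ} (a q : Lset.Term (Fin k ⊕ Fin n)) : Lset.BoundedFormula (Fin k) n :=
  ∀' (bmem lastV (liftT q) ⇔ beq lastV (liftT a))

@[simp] theorem realize_singF {k n : ℕ} {a q : Lset.Term (Fin k ⊕ Fin n)}
    {v : Fin k → ZFSet.{u}} {xs : Fin n → ZFSet.{u}} :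
    (singF a q).Realize v xs ↔
      q.realize (Sum.elim v xs) = ({a.realize (Sum.elim v xs)} : ZFSet.{u}) := by
  simp only [singF, BoundedFormula.realize_all, BoundedFormula.realize_iff,
    BoundedFormula.realize_rel₂, BoundedFormula.realize_bdEqual, realize_liftT, realize_lastV,
    relMap_mem, realize_bmem]
  rw [ZFSet.ext_iff]
  simp [ZFSet.mem_singleton]

/-- `q = {a, b}` -/
def doubF {k n : ℕ} (a b q : Lset.Term (Fin k ⊕ Fin n)) : Lset.BoundedFormula (Fin k) n :=
  ∀' (bmem lastV (liftT q) ⇔ (beq lastV (liftT a) ⊔ beq lastV (liftT b)))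

@[simp] theorem realize_doubF {k n : ℕ} {a b q : Lset.Term (Fin k ⊕ Fin n)}
    {v : Fin k → ZFSet.{u}} {xs : Fin n → ZFSet.{u}} :
    (doubF a b q).Realize v xs ↔
      q.realize (Sum.elim v xs) =
        ({a.realize (Sum.elim v xs), b.realize (Sum.elim v xs)} : ZFSet.{u}) := by
  simp only [doubF, BoundedFormula.realize_all, BoundedFormula.realize_iff,
    BoundedFormula.realize_sup, BoundedFormula.realize_rel₂, BoundedFormula.realize_bdEqual,
    realize_liftT, realize_lastV, relMap_mem, realize_bmem]
  rw [ZFSet.ext_iff]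
  simp [ZFSet.mem_pair]

/-- `p = pair a b` (Kuratowski) -/
def pairIsF {k n : ℕ} (a b p : Lset.Term (Fin k ⊕ Fin n)) : Lset.BoundedFormula (Fin k) n :=
  ∀' (bmem lastV (liftT p) ⇔ (singF (liftT a) lastV ⊔ doubF (liftT a) (liftT b) lastV))

theorem mem_zpair {z a b : ZFSet.{u}} :
    z ∈ ZFSet.pair a b ↔ z = ({a} : ZFSet) ∨ z = ({a, b} : ZFSet) := by
  rw [ZFSet.pair, ZFSet.mem_pair]

@[simp] theorem realize_pairIsF {k n : ℕ} {a b p : Lset.Term (Fin k ⊕ Fin n)}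
    {v : Fin k → ZFSet.{u}} {xs : Fin n → ZFSet.{u}} :
    (pairIsF a b p).Realize v xs ↔
      p.realize (Sum.elim v xs) =
        ZFSet.pair (a.realize (Sum.elim v xs)) (b.realize (Sum.elim v xs)) := by
  simp only [pairIsF, BoundedFormula.realize_all, BoundedFormula.realize_iff,
    BoundedFormula.realize_sup, BoundedFormula.realize_rel₂, realize_singF, realize_doubF,
    realize_liftT, realize_lastV, relMap_mem, realize_bmem]
  rw [ZFSet.ext_iff]
  simp [mem_zpair]

/-- `pair a b ∈ R` -/
def pairMemF {k n : ℕ} (a b R : Lset.Term (Fin k ⊕ Fin n)) : Lset.BoundedFormula (Fin k) n :=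
  ∃' (bmem lastV (liftT R) ⊓ pairIsF (liftT a) (liftT b) lastV)

@[simp] theorem realize_pairMemF {k n : ℕ} {a b R : Lset.Term (Fin k ⊕ Fin n)}
    {v : Fin k → ZFSet.{u}} {xs : Fin n → ZFSet.{u}} :
    (pairMemF a b R).Realize v xs ↔
      ZFSet.pair (a.realize (Sum.elim v xs)) (b.realize (Sum.elim v xs)) ∈
        R.realize (Sum.elim v xs) := by
  simp only [pairMemF, BoundedFormula.realize_ex, BoundedFormula.realize_inf,
    BoundedFormula.realize_rel₂, realize_pairIsF, realize_liftT, realize_lastV, relMap_mem,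
    realize_bmem]
  constructor
  · rintro ⟨z, hz, rfl⟩; exact hz
  · intro h; exact ⟨_, h, rfl⟩

end Statement0
namespace Statement0
open FirstOrder Language ZFSet

def emptyF : Lset.Formula (Fin 1) := ∀' ∼(bmem lastV (fv 0))

theorem realize_emptyF (x : ZFSet.{u}) : emptyF.Realize ![x] ↔ x = ∅ := by
  simp [emptyF, Formula.Realize, Fin.snoc]
  constructor
  · intro h; apply ZFSet.ext; intro w; simp [ZFSet.notMem_empty, h w]
  · intro h w; rw [h]; exact ZFSet.notMem_empty w

def insF : Lset.Formula (Fin 3) :=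
  ∀' (bmem lastV (fv 2) ⇔ (beq lastV (fv 0) ⊔ bmem lastV (fv 1)))

theorem realize_insF (x y z : ZFSet.{u}) : insF.Realize ![x, y, z] ↔ z = insert x y := by
  simp [insF, Formula.Realize, Fin.snoc]
  constructor
  · intro h; apply ZFSet.ext; intro w; rw [ZFSet.mem_insert_iff]; exact h w
  · intro h w; rw [h, ZFSet.mem_insert_iff]

variable {j : ZFSet.{u} → ZFSet.{u}}

theorem j_comp_matrix1 (x : ZFSet.{u}) : j ∘ ![x] = ![j x] := by
  funext i; fin_cases i <;> rfl

theorem j_comp_matrix2 (x y : ZFSet.{u}) : j ∘ ![x, y] = ![j x, j y] := by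
  funext i; fin_cases i <;> rfl

theorem j_comp_matrix3 (x y z : ZFSet.{u}) : j ∘ ![x, y, z] = ![j x, j y, j z] := by
  funext i; fin_cases i <;> rfl

theorem j_inj (hj : IsElem j) : Function.Injective j := by
  intro x y h
  have h2 := (hj 2 (beq (fv 0) (fv 1)) ![x, y]).2
  rw [j_comp_matrix2] at h2
  simpa [Formula.Realize] using h2 (by simpa [Formula.Realize] using h)

theorem j_empty (hj : IsElem j) : j ∅ = ∅ := by
  have h := (hj 1 emptyF ![∅]).1 ((realize_emptyF ∅).2 rfl)
  rw [j_comp_matrix1] at h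
  exact (realize_emptyF _).1 h

theorem j_insert (hj : IsElem j) (a b : ZFSet.{u}) :
    j (insert a b) = insert (j a) (j b) := by
  have h := (hj 3 insF ![a, b, insert a b]).1 ((realize_insF a b _).2 rfl)
  rw [j_comp_matrix3] at h
  exact (realize_insF _ _ _).1 h

theorem j_isVN (hj : IsElem j) {x : ZFSet.{u}} (hx : IsVN x) : IsVN (j x) := by
  have h := (hj 1 ordF ![x]).1 ((realize_ordF x).2 hx)
  rw [j_comp_matrix1] at h
  exact (realize_ordF (j x)).1 h

theorem j_singleton (hj : IsElem j) (a : ZFSet.{u}) : j ({a} : ZFSet) = {j a} := by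
  have : ({a} : ZFSet.{u}) = insert a ∅ := rfl
  rw [this, j_insert hj, j_empty hj]; rfl

theorem j_doubleton (hj : IsElem j) (a b : ZFSet.{u}) :
    j ({a, b} : ZFSet) = {j a, j b} := by
  show j (insert a {b}) = insert (j a) {j b}
  rw [j_insert hj, j_singleton hj]

theorem j_zpair (hj : IsElem j) (a b : ZFSet.{u}) :
    j (ZFSet.pair a b) = ZFSet.pair (j a) (j b) := by
  show j (insert ({a} : ZFSet) {({a, b} : ZFSet)}) =
    insert ({j a} : ZFSet) {({j a, j b} : ZFSet)}
  rw [j_insert hj, j_singleton hj, j_singleton hj, j_doubleton hj]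

end Statement0
namespace Statement0
open FirstOrder Language ZFSet

/-- semantic simulation relation -/
def SimRel (R y w : ZFSet.{u}) : Prop :=
  ZFSet.pair y w ∈ R ∧
    ∀ a b : ZFSet.{u}, ZFSet.pair a b ∈ R → ∀ a' ∈ a, ∃ b' ∈ b, ZFSet.pair a' b' ∈ R

def simF : Lset.Formula (Fin 2) :=
  ∃' (pairMemF (fv 0) (fv 1) (bvT 0) ⊓
    ∀' ∀' ∀' (pairMemF (bvT 1) (bvT 2) (bvT 0) ⟹ (bmem (bvT 3) (bvT 1) ⟹
      ∃' (bmem (bvT 4) (bvT 2) ⊓ pairMemF (bvT 3) (bvT 4) (bvT 0)))))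

theorem realize_simF (y w : ZFSet.{u}) : simF.Realize ![y, w] ↔ ∃ R, SimRel R y w := by
  simp [simF, SimRel, Formula.Realize, Fin.snoc]
  norm_num [show ((3:Fin 4)).val = 3 from rfl, show ((4:Fin 5)).val = 4 from rfl,
    show ((3:Fin 5)).val = 3 from rfl]
  constructor
  · rintro ⟨R, h1, h2⟩; exact ⟨R, h1, fun a b hab a' ha' => h2 a b a' hab ha'⟩
  · rintro ⟨R, h1, h2⟩; exact ⟨R, h1, fun a b a' hab ha' => h2 a b hab a' ha'⟩

theorem simRel_rank_le {R y w : ZFSet.{u}} (h : SimRel R y w) : y.rank ≤ w.rank := by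
  have main : ∀ a : ZFSet.{u}, ∀ b, ZFSet.pair a b ∈ R → a.rank ≤ b.rank := fun a =>
    ZFSet.mem_wf.induction
      (C := fun a => ∀ b, ZFSet.pair a b ∈ R → a.rank ≤ b.rank) a
      (fun a IH b hab => by
        rw [ZFSet.rank_le_iff]
        intro a' ha'
        obtain ⟨b', hb', hpair⟩ := h.2 a b hab a' ha'
        exact lt_of_le_of_lt (IH a' ha' b' hpair) (ZFSet.rank_lt_of_mem hb'))
  exact main y w h.1

theorem exists_simRel {y w : ZFSet.{u}} (h : y.rank ≤ w.rank) : ∃ R, SimRel R y w := by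
  classical
  set γ := max y.rank w.rank + 1 with hγ
  set R := ZFSet.sep (fun p => ∃ a b : ZFSet.{u}, p = ZFSet.pair a b ∧ a.rank ≤ b.rank)
    (ZFSet.powerset (ZFSet.powerset (Vset γ))) with hR
  have hmemR : ∀ a b : ZFSet.{u}, ZFSet.pair a b ∈ R ↔
      (a.rank ≤ b.rank ∧ a ∈ Vset γ ∧ b ∈ Vset γ) := by
    intro a b
    rw [hR, ZFSet.mem_sep, ZFSet.mem_powerset]
    constructor
    · rintro ⟨hp, a', b', hab, hle⟩
      obtain ⟨ha, hb⟩ := ZFSet.pair_injective hab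
      subst ha; subst hb
      have h1 : ({a} : ZFSet) ∈ ZFSet.powerset (Vset γ) := hp (by rw [mem_zpair]; left; rfl)
      have h2 : ({a, b} : ZFSet) ∈ ZFSet.powerset (Vset γ) := hp (by rw [mem_zpair]; right; rfl)
      rw [ZFSet.mem_powerset] at h1 h2
      exact ⟨hle, h1 (ZFSet.mem_singleton.2 rfl), h2 (ZFSet.mem_pair.2 (Or.inr rfl))⟩
    · rintro ⟨hle, ha, hb⟩
      refine ⟨?_, a, b, rfl, hle⟩
      intro q hq
      rw [mem_zpair] at hq
      rw [ZFSet.mem_powerset]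
      rcases hq with rfl | rfl
      · intro r hr; rw [ZFSet.mem_singleton] at hr; subst hr; exact ha
      · intro r hr; rw [ZFSet.mem_pair] at hr; rcases hr with rfl | rfl
        · exact ha
        · exact hb
  have hV : ∀ z : ZFSet.{u}, z.rank ≤ max y.rank w.rank → z ∈ Vset γ := by
    intro z hz
    rw [mem_Vset, hγ]
    exact lt_of_le_of_lt hz (lt_add_one _)
  refine ⟨R, (hmemR y w).2 ⟨h, hV y (le_max_left _ _), hV w (le_max_right _ _)⟩, ?_⟩
  intro a b hab a' ha'
  rw [hmemR] at hab
  obtain ⟨hle, haV, hbV⟩ := hab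
  have hra' : a'.rank < a.rank := ZFSet.rank_lt_of_mem ha'
  have : a'.rank < b.rank := lt_of_lt_of_le hra' hle
  obtain ⟨b', hb', hrb'⟩ := ZFSet.lt_rank_iff.1 this
  refine ⟨b', hb', (hmemR a' b').2 ⟨hrb', ?_, ?_⟩⟩
  · rw [mem_Vset] at haV ⊢; exact (hra'.trans haV)
  · rw [mem_Vset] at hbV ⊢; exact (ZFSet.rank_lt_of_mem hb').trans hbV

theorem j_rank_le {j : ZFSet.{u} → ZFSet.{u}} (hj : IsElem j) {y w : ZFSet.{u}}
    (h : y.rank ≤ w.rank) : (j y).rank ≤ (j w).rank := by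
  have h1 := (hj 2 simF ![y, w]).1 ((realize_simF y w).2 (exists_simRel h))
  rw [j_comp_matrix2] at h1
  exact simRel_rank_le ((realize_simF _ _).1 h1).choose_spec

end Statement0
namespace Statement0
open FirstOrder Language ZFSet

variable {j : ZFSet.{u} → ZFSet.{u}}

theorem exists_j_ordz (hj : IsElem j) (α : Ordinal.{u}) : ∃ β, j (ordz α) = ordz β :=
  isVN_exists_ordz _ (j_isVN hj (isVN_ordz α))

/-- the ordinal map induced by `j` -/
def jo (hj : IsElem j) (α : Ordinal.{u}) : Ordinal.{u} := (exists_j_ordz hj α).choose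

theorem jo_spec (hj : IsElem j) (α : Ordinal.{u}) : j (ordz α) = ordz (jo hj α) :=
  (exists_j_ordz hj α).choose_spec

theorem jo_strictMono (hj : IsElem j) : StrictMono (jo hj) := by
  intro α β h
  have h2 := (j_mem hj).1 (ordz_mem_ordz_of_lt h)
  rw [jo_spec hj, jo_spec hj] at h2
  exact ordz_mem_ordz.1 h2

theorem le_jo (hj : IsElem j) (α : Ordinal.{u}) : α ≤ jo hj α :=
  (jo_strictMono hj).le_apply

theorem crit_set_nonempty (hj : IsElem j) (hj' : j ≠ id) :
    {α : Ordinal.{u} | ordz α ∈ j (ordz α)}.Nonempty := by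
  by_contra hne
  rw [Set.not_nonempty_iff_eq_empty] at hne
  have hfixo : ∀ α : Ordinal.{u}, j (ordz α) = ordz α := by
    intro α
    rcases lt_or_eq_of_le (le_jo hj α) with h | h
    · exfalso
      have : α ∈ {α : Ordinal.{u} | ordz α ∈ j (ordz α)} := by
        rw [Set.mem_setOf_eq, jo_spec hj]
        exact ordz_mem_ordz_of_lt h
      rw [hne] at this
      exact this
    · rw [jo_spec hj, ← h]
  have hall : ∀ (o : Ordinal.{u}) (x : ZFSet.{u}), x.rank < o → j x = x := by
    intro o
    induction o using Ordinal.induction with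
    | h o IH =>
      intro x hx
      have hfixlt : ∀ y : ZFSet.{u}, y.rank < x.rank → j y = y := fun y hy =>
        IH x.rank hx y hy
      have hr : (j x).rank ≤ x.rank := by
        have h1 : x.rank ≤ (ordz x.rank).rank := (rank_ordz x.rank).symm.le
        have h2 := j_rank_le hj h1
        rwa [hfixo, rank_ordz] at h2
      apply ZFSet.ext
      intro z
      constructor
      · intro hz
        have hzr : z.rank < x.rank := lt_of_lt_of_le (ZFSet.rank_lt_of_mem hz) hr
        have : j z ∈ j x := by rw [hfixlt z hzr]; exact hz
        exact (j_mem hj).2 this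
      · intro hz
        have h2 := (j_mem hj).1 hz
        rwa [hfixlt z (ZFSet.rank_lt_of_mem hz)] at h2
  exact hj' (funext fun x => hall (x.rank + 1) x (lt_add_one _))

theorem crit_mem (hj : IsElem j) (hj' : j ≠ id) :
    ordz (crit j) ∈ j (ordz (crit j)) :=
  csInf_mem (crit_set_nonempty hj hj')

theorem fix_below_crit (hj : IsElem j) {ξ : Ordinal.{u}} (hξ : ξ < crit j) :
    j (ordz ξ) = ordz ξ := by
  rcases lt_or_eq_of_le (le_jo hj ξ) with h | h
  · exfalso
    have : ξ ∈ {α : Ordinal.{u} | ordz α ∈ j (ordz α)} := by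
      rw [Set.mem_setOf_eq, jo_spec hj]
      exact ordz_mem_ordz_of_lt h
    exact absurd hξ (not_lt.2 (csInf_le (OrderBot.bddBelow _) this))
  · rw [jo_spec hj, ← h]

theorem crit_isLimit (hj : IsElem j) (hj' : j ≠ id) : Order.IsSuccLimit (crit j) := by
  rcases Ordinal.zero_or_succ_or_isSuccLimit (crit j) with h | ⟨β, h⟩ | h
  · exfalso
    have := crit_mem hj hj'
    rw [h, ordz_zero, j_empty hj] at this
    exact ZFSet.notMem_empty _ this
  · exfalso
    have hβ : β < crit j := by rw [← h]; exact Order.lt_succ_of_le le_rfl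
    have hfix : j (ordz β) = ordz β := fix_below_crit hj hβ
    have : j (ordz (crit j)) = ordz (crit j) := by
      rw [← h, ← Ordinal.add_one_eq_succ, ordz_succ, j_insert hj, hfix]
    have h2 := crit_mem hj hj'
    rw [this] at h2
    exact ZFSet.mem_irrefl _ h2
  · exact h

end Statement0
namespace Statement0
open FirstOrder Language ZFSet

/-- `s` is defined on all of `d`. -/
def domF : Lset.Formula (Fin 2) :=
  ∀' (bmem (bvT 0) (fv 1) ⟹ ∃' (pairMemF (bvT 0) (bvT 1) (fv 0)))

theorem realize_domF (s d : ZFSet.{u}) :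
    domF.Realize ![s, d] ↔ ∀ a ∈ d, ∃ b, ZFSet.pair a b ∈ s := by
  simp [domF, Formula.Realize, Fin.snoc]

/-- `s` is ∈-increasing. -/
def monoF : Lset.Formula (Fin 1) :=
  ∀' ∀' ∀' ∀' (pairMemF (bvT 0) (bvT 2) (fv 0) ⟹ pairMemF (bvT 1) (bvT 3) (fv 0) ⟹
    bmem (bvT 0) (bvT 1) ⟹ bmem (bvT 2) (bvT 3))

theorem realize_monoF (s : ZFSet.{u}) :
    monoF.Realize ![s] ↔ ∀ a a' b b' : ZFSet.{u},
      ZFSet.pair a b ∈ s → ZFSet.pair a' b' ∈ s → a ∈ a' → b ∈ b' := by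
  simp [monoF, Formula.Realize, Fin.snoc,
    show ((2:Fin 3)).val = 2 from rfl, show ((2:Fin 4)).val = 2 from rfl,
    show ((3:Fin 4)).val = 3 from rfl, show ((1:Fin 3)).val = 1 from rfl,
    show ((1:Fin 4)).val = 1 from rfl]

/-- all values of `s` lie in `L`. -/
def ranF : Lset.Formula (Fin 2) :=
  ∀' ∀' (pairMemF (bvT 0) (bvT 1) (fv 0) ⟹ bmem (bvT 1) (fv 1))

theorem realize_ranF (s L : ZFSet.{u}) :
    ranF.Realize ![s, L] ↔ ∀ a b : ZFSet.{u}, ZFSet.pair a b ∈ s → b ∈ L := by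
  simp [ranF, Formula.Realize, Fin.snoc]

end Statement0
open Statement0 in
/-- If `δ` is a cardinal of cofinality strictly greater than `κ = crit j`,
`C ⊆ δ` is club in `δ` with increasing enumeration `⟨α_ξ : ξ < cof δ⟩`, and `j(α_ξ) = α_ξ`
for all `ξ < κ`, then `j(α_κ) > α_κ`. -/
theorem club_not_all_fixed (j : ZFSet.{u} → ZFSet.{u}) (hj : IsElem j) (hj' : j ≠ id)
    (δ : Cardinal.{u}) (hcof : crit j < δ.ord.cof.ord)
    (C : Set Ordinal.{u}) (hC : IsClubIn C δ.ord)
    (e : Ordinal.{u} → Ordinal.{u})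
    (hmono : ∀ ξ₁ ξ₂ : Ordinal.{u}, ξ₁ < ξ₂ → ξ₂ < δ.ord.cof.ord → e ξ₁ < e ξ₂)
    (henum : C = e '' Set.Iio δ.ord.cof.ord)
    (hfix : ∀ ξ < crit j, j (ordz (e ξ)) = ordz (e ξ)) :
    ordz (e (crit j)) ∈ j (ordz (e (crit j))) := by
  classical
  set κ := crit j with hκdef
  have hκlim := crit_isLimit hj hj'
  have hκc : κ < δ.ord.cof.ord := hcof
  set S : Set Ordinal.{u} := e '' Set.Iio κ with hS
  have hSsub : S ⊆ C := by
    rintro x ⟨ξ, hξ, rfl⟩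
    rw [henum]
    exact ⟨ξ, hξ.trans hκc, rfl⟩
  have hSne : S.Nonempty := ⟨e 0, 0, hκlim.pos, rfl⟩
  have heκC : e κ ∈ C := by rw [henum]; exact ⟨κ, hκc, rfl⟩
  have heκδ : e κ < δ.ord := hC.1 heκC
  have hSle : ∀ x ∈ S, x ≤ e κ := by
    rintro x ⟨ξ, hξ, rfl⟩
    exact (hmono ξ κ hξ hκc).le
  have hsup_le : sSup S ≤ e κ := csSup_le hSne hSle
  have hsupC : sSup S ∈ C := hC.2.2 S hSsub hSne (lt_of_le_of_lt hsup_le heκδ)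
  have hbdd : BddAbove S := Ordinal.bddAbove_of_small (s := S)
  obtain ⟨μ, hμc, hμe⟩ : sSup S ∈ e '' Set.Iio δ.ord.cof.ord := henum ▸ hsupC
  have hμκ : μ = κ := by
    rcases lt_trichotomy μ κ with h | h | h
    · exfalso
      have h1 : μ + 1 < κ := by
        rw [Ordinal.add_one_eq_succ]
        exact hκlim.succ_lt h
      have h3 : e (μ + 1) ≤ sSup S := le_csSup hbdd ⟨μ + 1, h1, rfl⟩
      rw [← hμe] at h3
      exact absurd (hmono μ (μ + 1) (lt_add_one μ) (h1.trans hκc)) (not_lt.2 h3)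
    · exact h
    · exfalso
      have h2 := hmono κ μ h hμc
      rw [hμe] at h2
      exact absurd hsup_le (not_le.2 h2)
  have heκsup : e κ = sSup S := by rw [← hμκ, hμe]
  -- the set coding `e ↾ κ`
  set s : ZFSet.{u} := ZFSet.range.{u,u}
    (fun i : κ.ToType => ZFSet.pair (ordz (otypein κ i)) (ordz (e (otypein κ i)))) with hs
  have mem_s : ∀ p : ZFSet.{u},
      p ∈ s ↔ ∃ ξ < κ, p = ZFSet.pair (ordz ξ) (ordz (e ξ)) := by
    intro p
    rw [hs, ZFSet.mem_range]
    constructor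
    · rintro ⟨i, rfl⟩; exact ⟨otypein κ i, otypein_lt_self κ i, rfl⟩
    · rintro ⟨ξ, hξ, rfl⟩
      obtain ⟨i, hi⟩ := @Ordinal.typein_surj κ.ToType (· < ·) isWellOrder_lt ξ
        (by rwa [Ordinal.type_toType])
      refine ⟨i, ?_⟩
      show ZFSet.pair (ordz (otypein κ i)) (ordz (e (otypein κ i))) = _
      rw [show otypein κ i = ξ from hi]
  -- semantic properties of s
  have hdom : ∀ a ∈ ordz κ, ∃ b, ZFSet.pair a b ∈ s := by
    intro a ha
    obtain ⟨ξ, hξ, rfl⟩ := mem_ordz.1 ha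
    exact ⟨ordz (e ξ), (mem_s _).2 ⟨ξ, hξ, rfl⟩⟩
  have hmonos : ∀ a a' b b' : ZFSet.{u},
      ZFSet.pair a b ∈ s → ZFSet.pair a' b' ∈ s → a ∈ a' → b ∈ b' := by
    intro a a' b b' h1 h2 h3
    obtain ⟨ξ, hξ, hp⟩ := (mem_s _).1 h1
    obtain ⟨ξ', hξ', hp'⟩ := (mem_s _).1 h2
    obtain ⟨ha, hb⟩ := ZFSet.pair_injective hp
    obtain ⟨ha', hb'⟩ := ZFSet.pair_injective hp'
    subst ha; subst hb; subst ha'; subst hb'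
    have : ξ < ξ' := ordz_mem_ordz.1 h3
    exact ordz_mem_ordz_of_lt (hmono ξ ξ' this (hξ'.trans hκc))
  have hrans : ∀ a b : ZFSet.{u}, ZFSet.pair a b ∈ s → b ∈ ordz (e κ) := by
    intro a b h1
    obtain ⟨ξ, hξ, hp⟩ := (mem_s _).1 h1
    obtain ⟨ha, hb⟩ := ZFSet.pair_injective hp
    subst ha; subst hb
    exact ordz_mem_ordz_of_lt (hmono ξ κ hξ hκc)
  -- transfer to j s
  have tdom : ∀ a ∈ j (ordz κ), ∃ b, ZFSet.pair a b ∈ j s := by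
    have h := (hj 2 domF ![s, ordz κ]).1 ((realize_domF s (ordz κ)).2 hdom)
    rw [j_comp_matrix2] at h
    exact (realize_domF _ _).1 h
  have tmono : ∀ a a' b b' : ZFSet.{u},
      ZFSet.pair a b ∈ j s → ZFSet.pair a' b' ∈ j s → a ∈ a' → b ∈ b' := by
    have h := (hj 1 monoF ![s]).1 ((realize_monoF s).2 hmonos)
    rw [j_comp_matrix1] at h
    exact (realize_monoF _).1 h
  have tran : ∀ a b : ZFSet.{u}, ZFSet.pair a b ∈ j s → b ∈ j (ordz (e κ)) := by
    have h := (hj 2 ranF ![s, ordz (e κ)]).1 ((realize_ranF s (ordz (e κ))).2 hrans)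
    rw [j_comp_matrix2] at h
    exact (realize_ranF _ _).1 h
  -- fixed pairs
  have hfixpair : ∀ ξ, ξ < κ → ZFSet.pair (ordz ξ) (ordz (e ξ)) ∈ j s := by
    intro ξ hξ
    have h1 : ZFSet.pair (ordz ξ) (ordz (e ξ)) ∈ s := (mem_s _).2 ⟨ξ, hξ, rfl⟩
    have h2 := (j_mem hj).1 h1
    rwa [j_zpair hj, fix_below_crit hj hξ, hfix ξ hξ] at h2
  -- κ is moved
  have hκmoved : ordz κ ∈ j (ordz κ) := crit_mem hj hj'
  obtain ⟨b, hb⟩ := tdom (ordz κ) hκmoved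
  obtain ⟨θ, hθlt, rfl⟩ : ∃ θ, θ < jo hj (e κ) ∧ b = ordz θ := by
    have h1 := tran _ _ hb
    rw [jo_spec hj] at h1
    obtain ⟨θ, hθ, rfl⟩ := mem_ordz.1 h1
    exact ⟨θ, hθ, rfl⟩
  have hθub : ∀ ξ, ξ < κ → e ξ < θ := by
    intro ξ hξ
    have h1 := tmono (ordz ξ) (ordz κ) (ordz (e ξ)) (ordz θ)
      (hfixpair ξ hξ) hb (ordz_mem_ordz_of_lt hξ)
    exact ordz_mem_ordz.1 h1
  have hsupθ : e κ ≤ θ := by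
    rw [heκsup]
    refine csSup_le hSne ?_
    rintro x ⟨ξ, hξ, rfl⟩
    exact (hθub ξ hξ).le
  have : e κ < jo hj (e κ) := lt_of_le_of_lt hsupθ hθlt
  rw [jo_spec hj]
  exact ordz_mem_ordz_of_lt this
end
end

section
/- Let δ be a limit ordinal and let k, l ∈ E_δ be nontrivial elementary embeddings of V_δ into itself. Then for all a ∈ V_δ, k[l](k(a)) = k(l(a)), where k[l] is the application of k to l. -/
universe u

noncomputable section

open FirstOrder

namespace ZFEE

open FirstOrder.Language

/-! ### Formula machinery -/

@[simp] lemma relMap_mem {A : ZFSet.{u}} (v : Fin 2 → A.toSet) :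
    Structure.RelMap (L := Lset) (M := A.toSet) MemRel.mem v ↔
      (v 0 : ZFSet.{u}) ∈ (v 1 : ZFSet.{u}) := Iff.rfl

def tmem {n m : ℕ} (t u : Lset.Term (Fin n ⊕ Fin m)) : Lset.BoundedFormula (Fin n) m :=
  Relations.boundedFormula₂ MemRel.mem t u

lemma realize_tmem {A : ZFSet.{u}} {n m : ℕ} (t u : Lset.Term (Fin n ⊕ Fin m))
    (v : Fin n → A.toSet) (xs : Fin m → A.toSet) :
    (tmem t u).Realize v xs ↔
      ((t.realize (Sum.elim v xs) : A.toSet) : ZFSet.{u}) ∈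
        ((u.realize (Sum.elim v xs) : A.toSet) : ZFSet.{u}) := Iff.rfl

def fv {n m : ℕ} (i : Fin n) : Lset.Term (Fin n ⊕ Fin m) := Term.var (Sum.inl i)
def bv {n m : ℕ} (j : Fin m) : Lset.Term (Fin n ⊕ Fin m) := Term.var (Sum.inr j)

def φmem : Lset.Formula (Fin 2) := tmem (fv 0) (fv 1)

def φsubset : Lset.Formula (Fin 2) :=
  BoundedFormula.all ((tmem (bv 0) (fv 0)).imp (tmem (bv 0) (fv 1)))

def φupair : Lset.Formula (Fin 3) :=
  BoundedFormula.all ((tmem (bv 0) (fv 2)).iff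
    (((bv 0).bdEqual (fv 0)) ⊔ ((bv 0).bdEqual (fv 1))))

def Uf (t₁ t₂ : Lset.Term (Fin 3 ⊕ Fin 4)) : Lset.BoundedFormula (Fin 3) 3 :=
  BoundedFormula.all ((tmem (bv 3) (bv 2)).iff (((bv 3).bdEqual t₁) ⊔ ((bv 3).bdEqual t₂)))

def ψfun : Lset.Formula (Fin 3) :=
  BoundedFormula.all (BoundedFormula.all ((tmem (bv 1) (fv 1)).imp
    ((BoundedFormula.all ((tmem (bv 2) (bv 1)).iff ((Uf (fv 0) (fv 0)) ⊔ (Uf (fv 0) (bv 0))))).imp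
      ((bv 0).bdEqual (fv 2)))))

lemma realize_φmem {A : ZFSet.{u}} (a : Fin 2 → A.toSet) :
    φmem.Realize a ↔ (a 0 : ZFSet.{u}) ∈ (a 1 : ZFSet.{u}) := by
  simp [φmem, Formula.Realize, realize_tmem, fv]

lemma realize_φsubset {A : ZFSet.{u}} (a : Fin 2 → A.toSet) :
    φsubset.Realize a ↔
      ∀ u : A.toSet, (u : ZFSet.{u}) ∈ (a 0 : ZFSet.{u}) → (u : ZFSet.{u}) ∈ (a 1 : ZFSet.{u}) := by
  simp [φsubset, Formula.Realize, realize_tmem, Fin.snoc, fv, bv]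

lemma realize_φupair {A : ZFSet.{u}} (a : Fin 3 → A.toSet) :
    φupair.Realize a ↔
      ∀ u : A.toSet, ((u : ZFSet.{u}) ∈ (a 2 : ZFSet.{u}) ↔ (u = a 0 ∨ u = a 1)) := by
  simp [φupair, Formula.Realize, realize_tmem, Fin.snoc, fv, bv]

lemma realize_ψfun {A : ZFSet.{u}} (a : Fin 3 → A.toSet) :
    ψfun.Realize a ↔
      ∀ y p : A.toSet, (p : ZFSet.{u}) ∈ (a 1 : ZFSet.{u}) →
        (∀ u : A.toSet, ((u : ZFSet.{u}) ∈ (p : ZFSet.{u}) ↔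
          ((∀ t : A.toSet, ((t : ZFSet.{u}) ∈ (u : ZFSet.{u}) ↔ (t = a 0 ∨ t = a 0))) ∨
           (∀ t : A.toSet, ((t : ZFSet.{u}) ∈ (u : ZFSet.{u}) ↔ (t = a 0 ∨ t = y)))))) →
        y = a 2 := by
  simp [ψfun, Uf, Formula.Realize, realize_tmem, fv, bv, Fin.snoc,
    (show ((0:Fin 2):ℕ) = 0 from rfl), (show ((1:Fin 2):ℕ) = 1 from rfl),
    (show ((0:Fin 3):ℕ) = 0 from rfl), (show ((1:Fin 3):ℕ) = 1 from rfl),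
    (show ((2:Fin 3):ℕ) = 2 from rfl),
    (show ((0:Fin 4):ℕ) = 0 from rfl), (show ((1:Fin 4):ℕ) = 1 from rfl),
    (show ((2:Fin 4):ℕ) = 2 from rfl), (show ((3:Fin 4):ℕ) = 3 from rfl)]

/-! ### The cumulative hierarchy and ranks -/

theorem otypein_surj {o β : Ordinal.{u}} (h : β < o) : ∃ i : o.ToType, otypein o i = β := by
  obtain ⟨i, hi⟩ := @Ordinal.typein_surj o.ToType ((· < ·)) isWellOrder_lt β
    (by rw [Ordinal.type_toType]; exact h)
  exact ⟨i, hi⟩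

theorem mem_Vset {o : Ordinal.{u}} {x : ZFSet.{u}} : x ∈ Vset o ↔ x.rank < o := by
  induction o using Ordinal.induction generalizing x with
  | h o IH =>
    rw [Vset]
    simp only [ZFSet.mem_sUnion, ZFSet.mem_range, Set.mem_range]
    constructor
    · rintro ⟨z, ⟨i, rfl⟩, hx⟩
      rw [ZFSet.mem_powerset] at hx
      have : x.rank ≤ otypein o i :=
        ZFSet.rank_le_iff.2 fun y hy => (IH _ (otypein_lt_self o i)).1 (hx hy)
      exact lt_of_le_of_lt this (otypein_lt_self o i)
    · intro hx
      obtain ⟨i, hi⟩ := otypein_surj hx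
      refine ⟨_, ⟨i, rfl⟩, ?_⟩
      rw [ZFSet.mem_powerset, hi]
      intro y hy
      exact (IH _ hx).2 (ZFSet.rank_lt_of_mem hy)

variable {δ : Ordinal.{u}}

theorem trans_Vset {x y : ZFSet.{u}} (hx : x ∈ Vset δ) (hy : y ∈ x) : y ∈ Vset δ :=
  mem_Vset.2 ((ZFSet.rank_lt_of_mem hy).trans (mem_Vset.1 hx))

theorem Vset_mem_Vset {α : Ordinal.{u}} (h : α < δ) : Vset α ∈ Vset δ :=
  mem_Vset.2 (lt_of_le_of_lt (ZFSet.rank_le_iff.2 fun _ hy => mem_Vset.1 hy) h)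

theorem upair_mem_Vset (hδ : Order.IsSuccLimit δ) {x y : ZFSet.{u}} (hx : x ∈ Vset δ) (hy : y ∈ Vset δ) :
    ({x, y} : ZFSet.{u}) ∈ Vset δ := by
  rw [mem_Vset, ZFSet.rank_pair]
  exact max_lt (hδ.succ_lt (mem_Vset.1 hx)) (hδ.succ_lt (mem_Vset.1 hy))

theorem sing_mem_Vset (hδ : Order.IsSuccLimit δ) {x : ZFSet.{u}} (hx : x ∈ Vset δ) :
    ({x} : ZFSet.{u}) ∈ Vset δ := by
  rw [mem_Vset, ZFSet.rank_singleton]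
  exact hδ.succ_lt (mem_Vset.1 hx)

theorem kpair_mem_Vset (hδ : Order.IsSuccLimit δ) {x y : ZFSet.{u}} (hx : x ∈ Vset δ) (hy : y ∈ Vset δ) :
    ZFSet.pair x y ∈ Vset δ :=
  upair_mem_Vset hδ (sing_mem_Vset hδ hx) (upair_mem_Vset hδ hx hy)

theorem upair_self (x : ZFSet.{u}) : ({x, x} : ZFSet.{u}) = {x} := by
  apply ZFSet.ext; intro z; simp [ZFSet.mem_pair]

/-! ### Set-coded functions -/

theorem fval_spec {f x : ZFSet.{u}} (h : ∃ y, ZFSet.pair x y ∈ f) :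
    ZFSet.pair x (fval f x) ∈ f := by
  rw [fval, dif_pos h]
  exact h.choose_spec

theorem fval_graph {A kk : ZFSet.{u}} {F : A.toSet → A.toSet}
    (hF : ∀ p : ZFSet.{u}, p ∈ kk ↔ ∃ x : A.toSet, p = ZFSet.pair x (F x))
    {x : ZFSet.{u}} (hx : x ∈ A) : fval kk x = (F ⟨x, hx⟩ : ZFSet.{u}) := by
  have hex : ∃ y, ZFSet.pair x y ∈ kk := ⟨F ⟨x, hx⟩, (hF _).2 ⟨⟨x, hx⟩, rfl⟩⟩
  obtain ⟨x', hx'⟩ := (hF _).1 (fval_spec hex)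
  obtain ⟨h1, h2⟩ := ZFSet.pair_injective hx'
  have hxx : x' = ⟨x, hx⟩ := Subtype.ext h1.symm
  rw [h2, hxx]

theorem mem_restrict {ll : ZFSet.{u}} {G : (Vset δ).toSet → (Vset δ).toSet}
    (hG : ∀ p : ZFSet.{u}, p ∈ ll ↔ ∃ x : (Vset δ).toSet, p = ZFSet.pair x (G x))
    (α : Ordinal.{u}) (p : ZFSet.{u}) :
    p ∈ restrictGraph ll (Vset α) ↔
      ∃ x : (Vset δ).toSet, (x : ZFSet.{u}) ∈ Vset α ∧ p = ZFSet.pair x (G x) := by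
  rw [restrictGraph, ZFSet.mem_sep]
  constructor
  · rintro ⟨hpl, x₀, hx₀, y₀, rfl⟩
    obtain ⟨x, hx⟩ := (hG _).1 hpl
    obtain ⟨h1, -⟩ := ZFSet.pair_injective hx
    exact ⟨x, h1 ▸ hx₀, hx⟩
  · rintro ⟨x, hx, rfl⟩
    exact ⟨(hG _).2 ⟨x, rfl⟩, x, hx, _, rfl⟩

theorem restrict_subset {ll : ZFSet.{u}} {G : (Vset δ).toSet → (Vset δ).toSet}
    (hG : ∀ p : ZFSet.{u}, p ∈ ll ↔ ∃ x : (Vset δ).toSet, p = ZFSet.pair x (G x))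
    {α β : Ordinal.{u}} (h : α ≤ β) :
    restrictGraph ll (Vset α) ⊆ restrictGraph ll (Vset β) := by
  intro p hp
  rw [mem_restrict hG] at hp ⊢
  obtain ⟨x, hx, rfl⟩ := hp
  exact ⟨x, mem_Vset.2 (lt_of_lt_of_le (mem_Vset.1 hx) h), rfl⟩

theorem restrict_mem_Vset (hδ : Order.IsSuccLimit δ) {ll : ZFSet.{u}}
    {G : (Vset δ).toSet → (Vset δ).toSet}
    (hG : ∀ p : ZFSet.{u}, p ∈ ll ↔ ∃ x : (Vset δ).toSet, p = ZFSet.pair x (G x))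
    (hmem : ∀ x y : (Vset δ).toSet, (x : ZFSet.{u}) ∈ (y : ZFSet.{u}) →
      (G x : ZFSet.{u}) ∈ (G y : ZFSet.{u}))
    {α : Ordinal.{u}} (hα : α < δ) : restrictGraph ll (Vset α) ∈ Vset δ := by
  set R : Ordinal.{u} := (G ⟨Vset α, Vset_mem_Vset hα⟩ : ZFSet.{u}).rank with hR
  have hRδ : R < δ := mem_Vset.1 (G ⟨Vset α, Vset_mem_Vset hα⟩).2
  rw [mem_Vset]
  have hbound : (restrictGraph ll (Vset α)).rank ≤ Order.succ (Order.succ (α ⊔ R)) := by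
    apply ZFSet.rank_le_iff.2
    intro p hp
    rw [mem_restrict hG] at hp
    obtain ⟨x, hx, rfl⟩ := hp
    have hrx : (x : ZFSet.{u}).rank < α ⊔ R := lt_of_lt_of_le (mem_Vset.1 hx) le_sup_left
    have hrG : (G x : ZFSet.{u}).rank < α ⊔ R := by
      refine lt_of_lt_of_le ?_ (le_sup_right)
      exact ZFSet.rank_lt_of_mem (hmem x ⟨Vset α, Vset_mem_Vset hα⟩ hx)
    have hpair : ZFSet.pair (x : ZFSet.{u}) (G x : ZFSet.{u}) =
        ({{(x : ZFSet.{u})}, {(x : ZFSet.{u}), (G x : ZFSet.{u})}} : ZFSet.{u}) := rfl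
    rw [hpair, ZFSet.rank_pair, ZFSet.rank_pair, ZFSet.rank_singleton]
    apply max_lt
    · exact Order.succ_lt_succ (Order.succ_lt_succ hrx)
    · apply Order.succ_lt_succ
      apply sup_lt_iff.2
      exact ⟨Order.succ_lt_succ hrx, Order.succ_lt_succ hrG⟩
  refine lt_of_le_of_lt hbound ?_
  exact hδ.succ_lt (hδ.succ_lt (max_lt hα hRδ))

/-! ### Elementarity consequences -/

def ElemP (A : ZFSet.{u}) (F : A.toSet → A.toSet) : Prop :=
  ∀ (n : ℕ) (φ : Lset.Formula (Fin n)) (a : Fin n → A.toSet),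
    φ.Realize a ↔ φ.Realize (F ∘ a)

variable {A : ZFSet.{u}} {F : A.toSet → A.toSet}

theorem elem_mem (hFe : ElemP A F) (x y : A.toSet) (h : (x : ZFSet.{u}) ∈ (y : ZFSet.{u})) :
    (F x : ZFSet.{u}) ∈ (F y : ZFSet.{u}) := by
  have h0 : φmem.Realize ![x, y] := by rw [realize_φmem]; simpa using h
  have h1 := (hFe 2 φmem ![x, y]).1 h0
  rw [realize_φmem] at h1
  simpa using h1

theorem upair_char (htr : ∀ u : A.toSet, ∀ z ∈ (u : ZFSet.{u}), z ∈ A) (x y w : A.toSet) :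
    (∀ u : A.toSet, ((u : ZFSet.{u}) ∈ (w : ZFSet.{u}) ↔ (u = x ∨ u = y))) ↔
      (w : ZFSet.{u}) = {(x : ZFSet.{u}), (y : ZFSet.{u})} := by
  constructor
  · intro h
    apply ZFSet.ext; intro z
    constructor
    · intro hz
      rw [ZFSet.mem_pair]
      rcases (h ⟨z, htr w z hz⟩).1 hz with h' | h'
      · exact Or.inl (congrArg Subtype.val h')
      · exact Or.inr (congrArg Subtype.val h')
    · intro hz
      rcases ZFSet.mem_pair.1 hz with rfl | rfl
      · exact (h x).2 (Or.inl rfl)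
      · exact (h y).2 (Or.inr rfl)
  · intro hw u
    rw [hw, ZFSet.mem_pair]
    constructor
    · rintro (h | h)
      · exact Or.inl (Subtype.ext h)
      · exact Or.inr (Subtype.ext h)
    · rintro (rfl | rfl)
      · exact Or.inl rfl
      · exact Or.inr rfl

theorem elem_upair (hFe : ElemP A F) (htr : ∀ u : A.toSet, ∀ z ∈ (u : ZFSet.{u}), z ∈ A)
    (x y w : A.toSet) (hw : (w : ZFSet.{u}) = {(x : ZFSet.{u}), (y : ZFSet.{u})}) :
    (F w : ZFSet.{u}) = {(F x : ZFSet.{u}), (F y : ZFSet.{u})} := by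
  have h0 : φupair.Realize ![x, y, w] := by
    rw [realize_φupair]
    simpa using (upair_char htr x y w).2 hw
  have h1 := (hFe 3 φupair ![x, y, w]).1 h0
  rw [realize_φupair] at h1
  apply (upair_char htr (F x) (F y) (F w)).1
  intro u
  simpa using h1 u

theorem elem_kpair (hFe : ElemP A F) (htr : ∀ u : A.toSet, ∀ z ∈ (u : ZFSet.{u}), z ∈ A)
    (p x y : A.toSet) (hp : (p : ZFSet.{u}) = ZFSet.pair x y)
    (hsx : ({(x : ZFSet.{u})} : ZFSet.{u}) ∈ A)
    (hxy : ({(x : ZFSet.{u}), (y : ZFSet.{u})} : ZFSet.{u}) ∈ A) :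
    (F p : ZFSet.{u}) = ZFSet.pair (F x) (F y) := by
  have e1 : (F ⟨_, hsx⟩ : ZFSet.{u}) = {(F x : ZFSet.{u})} := by
    have := elem_upair hFe htr x x ⟨_, hsx⟩ (upair_self (x : ZFSet.{u})).symm
    rw [this, upair_self]
  have e2 : (F ⟨_, hxy⟩ : ZFSet.{u}) = {(F x : ZFSet.{u}), (F y : ZFSet.{u})} :=
    elem_upair hFe htr x y ⟨_, hxy⟩ rfl
  have e3 : (F p : ZFSet.{u}) = {(F ⟨_, hsx⟩ : ZFSet.{u}), (F ⟨_, hxy⟩ : ZFSet.{u})} :=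
    elem_upair hFe htr ⟨_, hsx⟩ ⟨_, hxy⟩ p hp
  rw [e3, e1, e2]
  rfl

theorem elem_subset (hFe : ElemP A F) (htr : ∀ u : A.toSet, ∀ z ∈ (u : ZFSet.{u}), z ∈ A)
    (x y : A.toSet) (h : (x : ZFSet.{u}) ⊆ (y : ZFSet.{u})) :
    (F x : ZFSet.{u}) ⊆ (F y : ZFSet.{u}) := by
  have h0 : φsubset.Realize ![x, y] := by
    rw [realize_φsubset]
    intro u hu
    simp only [Matrix.cons_val_zero, Matrix.cons_val_one, Matrix.head_cons] at hu ⊢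
    exact h hu
  have h1 := (hFe 2 φsubset ![x, y]).1 h0
  rw [realize_φsubset] at h1
  intro z hz
  have hzA : z ∈ A := htr (F x) z hz
  have := h1 ⟨z, hzA⟩ (by simpa using hz)
  simpa using this

theorem isPair_char (htr : ∀ u : A.toSet, ∀ z ∈ (u : ZFSet.{u}), z ∈ A)
    (p x y : A.toSet)
    (hsx : ({(x : ZFSet.{u})} : ZFSet.{u}) ∈ A)
    (hxy : ({(x : ZFSet.{u}), (y : ZFSet.{u})} : ZFSet.{u}) ∈ A) :
    (∀ u : A.toSet, ((u : ZFSet.{u}) ∈ (p : ZFSet.{u}) ↔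
      ((∀ t : A.toSet, ((t : ZFSet.{u}) ∈ (u : ZFSet.{u}) ↔ (t = x ∨ t = x))) ∨
       (∀ t : A.toSet, ((t : ZFSet.{u}) ∈ (u : ZFSet.{u}) ↔ (t = x ∨ t = y)))))) ↔
      (p : ZFSet.{u}) = ZFSet.pair x y := by
  have hc : ∀ u : A.toSet,
      ((∀ t : A.toSet, ((t : ZFSet.{u}) ∈ (u : ZFSet.{u}) ↔ (t = x ∨ t = x))) ∨
       (∀ t : A.toSet, ((t : ZFSet.{u}) ∈ (u : ZFSet.{u}) ↔ (t = x ∨ t = y)))) ↔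
      ((u : ZFSet.{u}) = {(x : ZFSet.{u}), (x : ZFSet.{u})} ∨
       (u : ZFSet.{u}) = {(x : ZFSet.{u}), (y : ZFSet.{u})}) :=
    fun u => or_congr (upair_char htr x x u) (upair_char htr x y u)
  have hpd : ZFSet.pair (x : ZFSet.{u}) (y : ZFSet.{u}) =
      ({{(x : ZFSet.{u})}, {(x : ZFSet.{u}), (y : ZFSet.{u})}} : ZFSet.{u}) := rfl
  constructor
  · intro h
    apply ZFSet.ext; intro z
    rw [hpd, ZFSet.mem_pair]
    constructor
    · intro hz
      have hzA := htr p z hz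
      rcases (hc ⟨z, hzA⟩).1 ((h ⟨z, hzA⟩).1 hz) with h' | h'
      · exact Or.inl ((show z = {(x : ZFSet.{u}), (x : ZFSet.{u})} from h').trans (upair_self _))
      · exact Or.inr h'
    · rintro (rfl | rfl)
      · exact (h ⟨_, hsx⟩).2 ((hc _).2 (Or.inl (upair_self (x : ZFSet.{u})).symm))
      · exact (h ⟨_, hxy⟩).2 ((hc _).2 (Or.inr rfl))
  · intro hp u
    rw [hc u, hp, hpd, ZFSet.mem_pair, upair_self]

end ZFEE

open ZFEE in

/-- For a limit ordinal `δ` and `k, l ∈ E_δ`, `k[l](k(a)) = k(l(a))` for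
all `a ∈ V_δ`. -/
theorem application_on_range (δ : Ordinal.{u}) (hδ : Order.IsSuccLimit δ)
    (k l : ZFSet.{u}) (hk : k ∈ Eset δ) (hl : l ∈ Eset δ)
    (a : ZFSet.{u}) (ha : a ∈ Vset δ) :
    fval (appE δ k l) (fval k a) = fval k (fval l a) := by
  rw [Eset, ZFSet.mem_sep] at hk hl
  obtain ⟨-, F, hFg, hFe, -⟩ := hk
  obtain ⟨-, G, hGg, hGe, -⟩ := hl
  have htr : ∀ u : (Vset δ).toSet, ∀ z ∈ (u : ZFSet.{u}), z ∈ Vset δ :=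
    fun u z hz => trans_Vset u.2 hz
  have hGmem : ∀ x y : (Vset δ).toSet, (x : ZFSet.{u}) ∈ (y : ZFSet.{u}) →
      (G x : ZFSet.{u}) ∈ (G y : ZFSet.{u}) := fun x y h => elem_mem hGe x y h
  set aA : (Vset δ).toSet := ⟨a, ha⟩ with haA
  have hfl : fval l a = (G aA : ZFSet.{u}) := fval_graph hGg ha
  have hfk : fval k (fval l a) = (F (G aA) : ZFSet.{u}) := by
    rw [hfl]; exact fval_graph hFg (G aA).2
  have hb : fval k a = (F aA : ZFSet.{u}) := fval_graph hFg ha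
  -- existence
  have hrka : a.rank < δ := mem_Vset.1 ha
  have hrka1 : a.rank + 1 < δ := by
    rw [Ordinal.add_one_eq_succ]; exact hδ.succ_lt hrka
  obtain ⟨i₀, hi₀⟩ := otypein_surj hrka1
  have hS1 : restrictGraph l (Vset (a.rank + 1)) ∈ Vset δ :=
    restrict_mem_Vset hδ hGg hGmem hrka1
  set S1 : (Vset δ).toSet := ⟨_, hS1⟩ with hS1d
  have hpair_mem : ZFSet.pair a (G aA : ZFSet.{u}) ∈ Vset δ :=
    kpair_mem_Vset hδ ha (G aA).2
  set pA : (Vset δ).toSet := ⟨_, hpair_mem⟩ with hpAd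
  have hpS1 : (pA : ZFSet.{u}) ∈ (S1 : ZFSet.{u}) := by
    rw [hS1d]
    exact (mem_restrict hGg _ _).2
      ⟨aA, mem_Vset.2 (by rw [Ordinal.add_one_eq_succ]; exact Order.lt_succ _), rfl⟩
  have hFp : (F pA : ZFSet.{u}) ∈ (F S1 : ZFSet.{u}) := elem_mem hFe pA S1 hpS1
  have hFpval : (F pA : ZFSet.{u}) = ZFSet.pair (F aA) (F (G aA)) :=
    elem_kpair hFe htr pA aA (G aA) rfl (sing_mem_Vset hδ ha)
      (upair_mem_Vset hδ ha (G aA).2)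
  have hex : ZFSet.pair (F aA : ZFSet.{u}) (F (G aA) : ZFSet.{u}) ∈ appE δ k l := by
    rw [appE, ZFSet.mem_sUnion]
    refine ⟨fval k (restrictGraph l (Vset (otypein δ i₀))), ZFSet.mem_range.2 ⟨i₀, rfl⟩, ?_⟩
    rw [hi₀, fval_graph hFg hS1]
    rw [← hFpval]
    exact hFp
  -- uniqueness
  have huniq : ∀ y : ZFSet.{u}, ZFSet.pair (F aA : ZFSet.{u}) y ∈ appE δ k l →
      y = (F (G aA) : ZFSet.{u}) := by
    intro y hy
    rw [appE, ZFSet.mem_sUnion] at hy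
    obtain ⟨w, hw, hyw⟩ := hy
    rw [ZFSet.mem_range] at hw
    obtain ⟨i, rfl⟩ := hw
    set α : Ordinal.{u} := otypein δ i with hα
    have hαδ : α < δ := otypein_lt_self δ i
    set γ : Ordinal.{u} := α ⊔ (a.rank + 1) with hγd
    have hγδ : γ < δ := max_lt hαδ hrka1
    have hSα : restrictGraph l (Vset α) ∈ Vset δ := restrict_mem_Vset hδ hGg hGmem hαδ
    have hSγ : restrictGraph l (Vset γ) ∈ Vset δ := restrict_mem_Vset hδ hGg hGmem hγδ
    set Sα : (Vset δ).toSet := ⟨_, hSα⟩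
    set Sγ : (Vset δ).toSet := ⟨_, hSγ⟩
    have hyw' : ZFSet.pair (F aA : ZFSet.{u}) y ∈ (F Sα : ZFSet.{u}) := by
      rw [← fval_graph hFg hSα]; exact hyw
    have hsub : (F Sα : ZFSet.{u}) ⊆ (F Sγ : ZFSet.{u}) :=
      elem_subset hFe htr Sα Sγ (restrict_subset hGg le_sup_left)
    have hyγ : ZFSet.pair (F aA : ZFSet.{u}) y ∈ (F Sγ : ZFSet.{u}) := hsub hyw'
    -- y ∈ Vset δ
    have hpV : ZFSet.pair (F aA : ZFSet.{u}) y ∈ Vset δ := trans_Vset (F Sγ).2 hyγ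
    have hupV : ({(F aA : ZFSet.{u}), y} : ZFSet.{u}) ∈ Vset δ :=
      trans_Vset hpV (ZFSet.mem_pair.2 (Or.inr rfl))
    have hyV : y ∈ Vset δ := trans_Vset hupV (ZFSet.mem_pair.2 (Or.inr rfl))
    -- V-side realization
    have haγ : (aA : ZFSet.{u}) ∈ Vset γ :=
      mem_Vset.2 (lt_of_lt_of_le (by rw [Ordinal.add_one_eq_succ]; exact Order.lt_succ _)
        (le_sup_right (a := α)))
    have hψ : ψfun.Realize ![aA, Sγ, G aA] := by
      rw [realize_ψfun]
      simp only [Matrix.cons_val_zero, Matrix.cons_val_one, Matrix.head_cons,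
        Matrix.cons_val_two, Matrix.tail_cons]
      intro y' p hp hpair
      have hpth : (p : ZFSet.{u}) = ZFSet.pair aA y' :=
        (isPair_char htr p aA y' (sing_mem_Vset hδ ha)
          (upair_mem_Vset hδ ha y'.2)).1 hpair
      rw [mem_restrict hGg] at hp
      obtain ⟨x, hx, hpx⟩ := hp
      rw [hpth] at hpx
      obtain ⟨h1, h2⟩ := ZFSet.pair_injective hpx
      have hxa : x = aA := Subtype.ext h1.symm
      apply Subtype.ext
      rw [h2, hxa]
    have hψF := (hFe 3 ψfun ![aA, Sγ, G aA]).1 hψ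
    rw [realize_ψfun] at hψF
    simp only [Function.comp_apply, Matrix.cons_val_zero, Matrix.cons_val_one,
      Matrix.head_cons, Matrix.cons_val_two, Matrix.tail_cons] at hψF
    have := hψF ⟨y, hyV⟩ ⟨_, hpV⟩ hyγ
      ((isPair_char htr ⟨_, hpV⟩ (F aA) ⟨y, hyV⟩ (sing_mem_Vset hδ (F aA).2)
        (upair_mem_Vset hδ (F aA).2 hyV)).2 rfl)
    exact congrArg Subtype.val this
  have hexy : ∃ y, ZFSet.pair (fval k a) y ∈ appE δ k l := by
    rw [hb]; exact ⟨_, hex⟩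
  have hval := fval_spec hexy
  rw [hb] at hval
  rw [hfk, hb]
  exact huniq _ hval
end
end

section
/- Let δ be a limit ordinal and let k, l ∈ E_δ be nontrivial elementary embeddings of V_δ into itself. Then k[l] ∈ E_δ, crit(k[l]) = k(crit l), and if ⟨γ_n : n ∈ ω⟩ is the critical sequence of l, then ⟨k(γ_n) : n ∈ ω⟩ is the critical sequence of k[l]. -/
universe u

noncomputable section

open FirstOrder

-- Section 1: basics on ordz, Vset, rank

theorem ZFSet.mem_toSet (a u : ZFSet.{u}) : a ∈ u.toSet ↔ a ∈ u := Iff.rfl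

namespace EEProof

open ZFSet Ordinal

lemma otypein_surj {β γ : Ordinal.{u}} (h : γ < β) : ∃ i : β.ToType, otypein β i = γ := by
  obtain ⟨i, hi⟩ := @Ordinal.typein_surj β.ToType (· < ·) isWellOrder_lt γ
    (by rw [Ordinal.type_toType]; exact h)
  exact ⟨i, hi⟩

lemma mem_ordz {x : ZFSet.{u}} {β : Ordinal.{u}} :
    x ∈ ordz β ↔ ∃ γ < β, x = ordz γ := by
  rw [ordz, ZFSet.mem_range]
  constructor
  · rintro ⟨i, rfl⟩
    exact ⟨otypein β i, otypein_lt_self β i, rfl⟩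
  · rintro ⟨γ, hγ, rfl⟩
    obtain ⟨i, hi⟩ := otypein_surj hγ
    exact ⟨i, by simp only [hi]⟩

lemma rank_ordz (β : Ordinal.{u}) : ZFSet.rank (ordz β) = β := by
  induction β using Ordinal.induction with
  | h β ih =>
    rw [ordz, ZFSet.rank_range]
    have : ∀ i : β.ToType, ZFSet.rank (ordz (otypein β i)) = otypein β i :=
      fun i => ih _ (otypein_lt_self β i)
    simp_rw [this]
    exact Ordinal.lsub_typein β

lemma ordz_injective {a b : Ordinal.{u}} (h : ordz a = ordz b) : a = b := by
  have ha := rank_ordz a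
  rw [h, rank_ordz b] at ha
  exact ha.symm

lemma ordz_mem_ordz {γ β : Ordinal.{u}} (h : γ < β) : ordz γ ∈ ordz β :=
  mem_ordz.2 ⟨γ, h, rfl⟩

lemma mem_Vset {x : ZFSet.{u}} {β : Ordinal.{u}} :
    x ∈ Vset β ↔ x.rank < β := by
  induction β using Ordinal.induction generalizing x with
  | h β ih =>
    rw [Vset, ZFSet.mem_sUnion]
    constructor
    · rintro ⟨z, hz, hxz⟩
      rw [ZFSet.mem_range] at hz
      obtain ⟨i, rfl⟩ := hz
      rw [ZFSet.mem_powerset] at hxz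
      have : x.rank ≤ otypein β i := by
        rw [ZFSet.rank_le_iff]
        intro y hy
        rw [← ih _ (otypein_lt_self β i)]
        exact hxz hy
      exact this.trans_lt (otypein_lt_self β i)
    · intro hx
      obtain ⟨i, hi⟩ := otypein_surj hx
      refine ⟨_, ZFSet.mem_range.2 ⟨i, rfl⟩, ZFSet.mem_powerset.2 ?_⟩
      intro y hy
      rw [ih _ (otypein_lt_self β i), hi]
      exact ZFSet.rank_lt_of_mem hy

lemma rank_Vset (β : Ordinal.{u}) : ZFSet.rank (Vset β) = β := by
  apply le_antisymm
  · rw [ZFSet.rank_le_iff]; intro y hy; exact mem_Vset.1 hy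
  · apply le_of_forall_lt
    intro γ hγ
    have : ordz γ ∈ Vset β := mem_Vset.2 (by rw [rank_ordz]; exact hγ)
    have h2 := ZFSet.rank_lt_of_mem this
    rwa [rank_ordz] at h2

lemma Vset_transitive {β : Ordinal.{u}} : (Vset β).IsTransitive := by
  intro y hy z hz
  exact mem_Vset.2 ((ZFSet.rank_lt_of_mem hz).trans (mem_Vset.1 hy))

lemma Vset_mono {γ β : Ordinal.{u}} (h : γ ≤ β) : Vset γ ⊆ Vset β := by
  intro x hx
  exact mem_Vset.2 ((mem_Vset.1 hx).trans_le h)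

lemma ordz_mem_Vset {γ β : Ordinal.{u}} : ordz γ ∈ Vset β ↔ γ < β := by
  rw [mem_Vset, rank_ordz]

/-- trans + trichotomous (bounded inside a transitive ambient) implies von Neumann -/
lemma eq_ordz_rank {x : ZFSet.{u}} (htr : x.IsTransitive)
    (htri : ∀ a ∈ x, ∀ b ∈ x, a ∈ b ∨ a = b ∨ b ∈ a) :
    x = ordz x.rank := by
  induction x using ZFSet.inductionOn with
  | _ x ih =>
    have hel : ∀ y ∈ x, y = ordz y.rank := by
      intro y hy
      refine ih y hy ?_ ?_
      · -- y is transitive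
        intro z hz w hw
        have hzx : z ∈ x := htr y hy hz
        have hwx : w ∈ x := htr z hzx hw
        rcases htri w hwx y hy with h | h | h
        · exact h
        · subst h
          exact absurd ((ZFSet.rank_lt_of_mem hw).trans (ZFSet.rank_lt_of_mem hz))
            (lt_irrefl _)
        · -- y ∈ w ∈ z ∈ y : rank cycle
          exact absurd (((ZFSet.rank_lt_of_mem h).trans (ZFSet.rank_lt_of_mem hw)).trans
            (ZFSet.rank_lt_of_mem hz)) (lt_irrefl _)
      · intro a ha b hb
        exact htri a (htr y hy ha) b (htr y hy hb)
    apply ZFSet.ext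
    intro z
    rw [mem_ordz]
    constructor
    · intro hz
      exact ⟨z.rank, ZFSet.rank_lt_of_mem hz, hel z hz⟩
    · rintro ⟨γ, hγ, rfl⟩
      obtain ⟨y, hy, hγy⟩ := ZFSet.lt_rank_iff.1 hγ
      have hyo := hel y hy
      rcases eq_or_lt_of_le hγy with h | h
      · rw [← h] at hyo; rw [← hyo]; exact hy
      · have : ordz γ ∈ y := by rw [hyo]; exact ordz_mem_ordz h
        exact htr y hy this

end EEProof

-- Section 2: formula toolkit
namespace EEProof
open FirstOrder Language ZFSet

def mF {α : Type} (x y : α) : Lset.Formula α :=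
  Relations.formula₂ MemRel.mem (Term.var x) (Term.var y)

def eF {α : Type} (x y : α) : Lset.Formula α :=
  Term.equal (Term.var x) (Term.var y)

variable {A : ZFSet.{u}}

lemma realize_mF {α : Type} {x y : α} {v : α → A.toSet} :
    (mF x y).Realize v ↔ (v x : ZFSet) ∈ (v y : ZFSet) := by
  exact Iff.rfl

lemma realize_eF {α : Type} {x y : α} {v : α → A.toSet} :
    (eF x y).Realize v ↔ (v x : ZFSet) = (v y : ZFSet) := by
  rw [eF, Formula.realize_equal]
  simp [Subtype.ext_iff]

def allV {α γ : Type} [Finite γ] (φ : Lset.Formula (α ⊕ γ)) : Lset.Formula α :=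
  φ.iAlls γ

def exV {α γ : Type} [Finite γ] (φ : Lset.Formula (α ⊕ γ)) : Lset.Formula α :=
  φ.iExs γ

lemma realize_allV {α γ : Type} [Finite γ] {φ : Lset.Formula (α ⊕ γ)} {v : α → A.toSet} :
    (allV φ).Realize v ↔ ∀ i : γ → A.toSet, φ.Realize (Sum.elim v i) := by
  rw [allV, Formula.realize_iAlls]

lemma realize_exV {α γ : Type} [Finite γ] {φ : Lset.Formula (α ⊕ γ)} {v : α → A.toSet} :
    (exV φ).Realize v ↔ ∃ i : γ → A.toSet, φ.Realize (Sum.elim v i) := by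
  rw [exV, Formula.realize_iExs]

end EEProof

namespace EEProof
open FirstOrder Language ZFSet

section VD
variable {δ : Ordinal.{u}} (hδ : Order.IsSuccLimit δ)
include hδ

omit hδ in
lemma mem_VD_of_mem {x y : ZFSet.{u}} (hx : x ∈ Vset δ) (hyx : y ∈ x) : y ∈ Vset δ :=
  Vset_transitive x hx hyx

lemma sing_mem_VD {x : ZFSet.{u}} (hx : x ∈ Vset δ) : ({x} : ZFSet) ∈ Vset δ := by
  rw [mem_Vset] at *
  rw [ZFSet.rank_singleton]
  exact hδ.succ_lt hx

lemma upair_mem_VD {x y : ZFSet.{u}} (hx : x ∈ Vset δ) (hy : y ∈ Vset δ) :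
    ({x, y} : ZFSet) ∈ Vset δ := by
  rw [mem_Vset] at *
  rw [ZFSet.rank_pair]
  exact max_lt (hδ.succ_lt hx) (hδ.succ_lt hy)

lemma kpair_mem_VD {x y : ZFSet.{u}} (hx : x ∈ Vset δ) (hy : y ∈ Vset δ) :
    ZFSet.pair x y ∈ Vset δ := by
  have h1 := sing_mem_VD hδ hx
  have h2 := upair_mem_VD hδ hx hy
  exact upair_mem_VD hδ h1 h2

omit hδ in
lemma fst_mem_VD {x y f : ZFSet.{u}} (hf : f ∈ Vset δ) (h : ZFSet.pair x y ∈ f) :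
    x ∈ Vset δ := by
  have h1 : ZFSet.pair x y ∈ Vset δ := mem_VD_of_mem hf h
  have h2 : ({x} : ZFSet) ∈ Vset δ := mem_VD_of_mem h1 (by
    rw [ZFSet.pair]; exact ZFSet.mem_insert _ _)
  exact mem_VD_of_mem h2 (ZFSet.mem_singleton.2 rfl)

omit hδ in
lemma snd_mem_VD {x y f : ZFSet.{u}} (hf : f ∈ Vset δ) (h : ZFSet.pair x y ∈ f) :
    y ∈ Vset δ := by
  have h1 : ZFSet.pair x y ∈ Vset δ := mem_VD_of_mem hf h
  have h2 : ({x, y} : ZFSet) ∈ Vset δ := mem_VD_of_mem h1 (by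
    rw [ZFSet.pair]
    exact ZFSet.mem_insert_of_mem _ (ZFSet.mem_singleton.2 rfl))
  exact mem_VD_of_mem h2 (by simp)

end VD
end EEProof

namespace EEProof
open FirstOrder Language ZFSet

set_option linter.unusedSectionVars false

/-- `q = {x}` -/
def sglF {α : Type} (q x : α) : Lset.Formula α :=
  allV (γ := Unit) ((mF (.inr ()) (.inl q)).iff (eF (.inr ()) (.inl x)))

/-- `q = {x, y}` -/
def unordF {α : Type} (q x y : α) : Lset.Formula α :=
  allV (γ := Unit) ((mF (.inr ()) (.inl q)).iff ((eF (.inr ()) (.inl x)) ⊔ (eF (.inr ()) (.inl y))))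

/-- `p = ⟨x, y⟩` (Kuratowski) -/
def pairF {α : Type} (p x y : α) : Lset.Formula α :=
  allV (γ := Unit) ((mF (.inr ()) (.inl p)).iff
    ((sglF (.inr ()) (.inl x)) ⊔ (unordF (.inr ()) (.inl x) (.inl y))))

/-- `⟨x, y⟩ ∈ f` -/
def pairMemF {α : Type} (x y f : α) : Lset.Formula α :=
  exV (γ := Unit) ((pairF (.inr ()) (.inl x) (.inl y)) ⊓ (mF (.inr ()) (.inl f)))

/-- `x ∈ dom f` -/
def inDomF {α : Type} (x f : α) : Lset.Formula α :=
  exV (γ := Unit) (pairMemF (.inl x) (.inr ()) (.inl f))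

/-- `x ⊆ y` -/
def subF {α : Type} (x y : α) : Lset.Formula α :=
  allV (γ := Unit) ((mF (.inr ()) (.inl x)).imp (mF (.inr ()) (.inl y)))

section VD
variable {δ : Ordinal.{u}} (hδ : Order.IsSuccLimit δ)
include hδ

lemma realize_sglF {α : Type} {q x : α} {v : α → (Vset δ).toSet} :
    (sglF q x).Realize v ↔ (v q : ZFSet) = ({(v x : ZFSet)} : ZFSet) := by
  rw [sglF, realize_allV]
  constructor
  · intro H
    apply ZFSet.ext
    intro z
    rw [ZFSet.mem_singleton]
    constructor
    · intro hz
      have hzV : z ∈ Vset δ := mem_VD_of_mem (v q).2 hz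
      have := H (fun _ => ⟨z, hzV⟩)
      rw [Formula.realize_iff, realize_mF, realize_eF] at this
      exact this.1 hz
    · rintro rfl
      have := H (fun _ => v x)
      rw [Formula.realize_iff, realize_mF, realize_eF] at this
      exact this.2 rfl
  · intro H i
    rw [Formula.realize_iff, realize_mF, realize_eF]
    simp only [Sum.elim_inl, Sum.elim_inr, H, ZFSet.mem_singleton]

lemma realize_unordF {α : Type} {q x y : α} {v : α → (Vset δ).toSet} :
    (unordF q x y).Realize v ↔ (v q : ZFSet) = ({(v x : ZFSet), (v y : ZFSet)} : ZFSet) := by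
  rw [unordF, realize_allV]
  constructor
  · intro H
    apply ZFSet.ext
    intro z
    rw [ZFSet.mem_pair]
    constructor
    · intro hz
      have hzV : z ∈ Vset δ := mem_VD_of_mem (v q).2 hz
      have := H (fun _ => ⟨z, hzV⟩)
      rw [Formula.realize_iff, realize_mF, Formula.realize_sup, realize_eF, realize_eF]
        at this
      exact this.1 hz
    · rintro (rfl | rfl)
      · have := H (fun _ => v x)
        rw [Formula.realize_iff, realize_mF, Formula.realize_sup, realize_eF, realize_eF]
          at this
        exact this.2 (Or.inl rfl)
      · have := H (fun _ => v y)
        rw [Formula.realize_iff, realize_mF, Formula.realize_sup, realize_eF, realize_eF]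
          at this
        exact this.2 (Or.inr rfl)
  · intro H i
    rw [Formula.realize_iff, realize_mF, Formula.realize_sup, realize_eF, realize_eF]
    simp only [Sum.elim_inl, Sum.elim_inr, H, ZFSet.mem_pair]

lemma realize_pairF {α : Type} {p x y : α} {v : α → (Vset δ).toSet} :
    (pairF p x y).Realize v ↔ (v p : ZFSet) = ZFSet.pair (v x : ZFSet) (v y : ZFSet) := by
  rw [pairF, realize_allV]
  have hmem : ∀ z : ZFSet, z ∈ ZFSet.pair (v x : ZFSet) (v y : ZFSet) ↔
      (z = {(v x : ZFSet)} ∨ z = {(v x : ZFSet), (v y : ZFSet)}) := by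
    intro z
    rw [ZFSet.pair]
    simp [ZFSet.mem_insert_iff, ZFSet.mem_singleton]
  constructor
  · intro H
    apply ZFSet.ext
    intro z
    rw [hmem]
    constructor
    · intro hz
      have hzV : z ∈ Vset δ := mem_VD_of_mem (v p).2 hz
      have := H (fun _ => ⟨z, hzV⟩)
      rw [Formula.realize_iff, realize_mF, Formula.realize_sup,
        realize_sglF hδ, realize_unordF hδ] at this
      exact this.1 hz
    · intro hz
      rcases hz with rfl | rfl
      · have := H (fun _ => ⟨{(v x : ZFSet)}, sing_mem_VD hδ (v x).2⟩)
        rw [Formula.realize_iff, realize_mF, Formula.realize_sup,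
          realize_sglF hδ, realize_unordF hδ] at this
        exact this.2 (Or.inl rfl)
      · have := H (fun _ => ⟨{(v x : ZFSet), (v y : ZFSet)}, upair_mem_VD hδ (v x).2 (v y).2⟩)
        rw [Formula.realize_iff, realize_mF, Formula.realize_sup,
          realize_sglF hδ, realize_unordF hδ] at this
        exact this.2 (Or.inr rfl)
  · intro H i
    rw [Formula.realize_iff, realize_mF, Formula.realize_sup, realize_sglF hδ, realize_unordF hδ]
    simp only [Sum.elim_inl, Sum.elim_inr, H, hmem]

lemma realize_pairMemF {α : Type} {x y f : α} {v : α → (Vset δ).toSet} :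
    (pairMemF x y f).Realize v ↔ ZFSet.pair (v x : ZFSet) (v y : ZFSet) ∈ (v f : ZFSet) := by
  rw [pairMemF, realize_exV]
  constructor
  · rintro ⟨i, hi⟩
    rw [Formula.realize_inf, realize_pairF hδ, realize_mF] at hi
    obtain ⟨h1, h2⟩ := hi
    simp only [Sum.elim_inl, Sum.elim_inr] at h1 h2
    rwa [h1] at h2
  · intro H
    refine ⟨fun _ => ⟨ZFSet.pair (v x : ZFSet) (v y : ZFSet),
      kpair_mem_VD hδ (v x).2 (v y).2⟩, ?_⟩
    rw [Formula.realize_inf, realize_pairF hδ, realize_mF]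
    exact ⟨rfl, H⟩

lemma realize_inDomF {α : Type} {x f : α} {v : α → (Vset δ).toSet} :
    (inDomF x f).Realize v ↔ ∃ b : ZFSet, ZFSet.pair (v x : ZFSet) b ∈ (v f : ZFSet) := by
  rw [inDomF, realize_exV]
  constructor
  · rintro ⟨i, hi⟩
    rw [realize_pairMemF hδ] at hi
    exact ⟨_, hi⟩
  · rintro ⟨b, hb⟩
    have hbV : b ∈ Vset δ := snd_mem_VD (v f).2 hb
    refine ⟨fun _ => ⟨b, hbV⟩, ?_⟩
    rw [realize_pairMemF hδ]
    exact hb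

lemma realize_subF {α : Type} {x y : α} {v : α → (Vset δ).toSet} :
    (subF x y).Realize v ↔ (v x : ZFSet) ⊆ (v y : ZFSet) := by
  rw [subF, realize_allV]
  constructor
  · intro H z hz
    have hzV : z ∈ Vset δ := mem_VD_of_mem (v x).2 hz
    have := H (fun _ => ⟨z, hzV⟩)
    rw [Formula.realize_imp, realize_mF, realize_mF] at this
    exact this hz
  · intro H i
    rw [Formula.realize_imp, realize_mF, realize_mF]
    exact fun h => H h

end VD
end EEProof

namespace EEProof
open FirstOrder Language ZFSet

set_option linter.unusedSectionVars false

/-- `f` is a functional graph -/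
def funcF {α : Type} (f : α) : Lset.Formula α :=
  allV (γ := Fin 3) ((pairMemF (.inr 0) (.inr 1) (.inl f) ⊓ pairMemF (.inr 0) (.inr 2) (.inl f)).imp
    (eF (.inr 1) (.inr 2)))

/-- every member of `f` is a Kuratowski pair -/
def allPairsF {α : Type} (f : α) : Lset.Formula α :=
  allV (γ := Unit) ((mF (.inr ()) (.inl f)).imp
    (exV (γ := Fin 2) (pairF (.inl (.inr ())) (.inr 0) (.inr 1))))

/-- `dom f = d` -/
def domEqF {α : Type} (f d : α) : Lset.Formula α :=
  allV (γ := Unit) ((inDomF (.inr ()) (.inl f)).iff (mF (.inr ()) (.inl d)))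

/-- `d` is transitive -/
def transF {α : Type} (d : α) : Lset.Formula α :=
  allV (γ := Fin 2) ((mF (.inr 0) (.inl d) ⊓ mF (.inr 1) (.inr 0)).imp (mF (.inr 1) (.inl d)))

/-- `o` is linearly ordered by `∈` -/
def trichF {α : Type} (o : α) : Lset.Formula α :=
  allV (γ := Fin 2) ((mF (.inr 0) (.inl o) ⊓ mF (.inr 1) (.inl o)).imp
    ((mF (.inr 0) (.inr 1) ⊔ eF (.inr 0) (.inr 1)) ⊔ mF (.inr 1) (.inr 0)))

/-- `o` is an ordinal -/
def ordF {α : Type} (o : α) : Lset.Formula α := transF o ⊓ trichF o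

/-- `f` fixes every ordinal in `c` that lies in its domain -/
def fixOrdF {α : Type} (c f : α) : Lset.Formula α :=
  allV (γ := Unit) (((ordF (.inr ()) ⊓ mF (.inr ()) (.inl c)) ⊓ inDomF (.inr ()) (.inl f)).imp
    (pairMemF (.inr ()) (.inr ()) (.inl f)))

/-- `c ∈ f(c)` -/
def movesF {α : Type} (c f : α) : Lset.Formula α :=
  exV (γ := Unit) ((pairMemF (.inl c) (.inr ()) (.inl f)) ⊓ (mF (.inl c) (.inr ())))

section VD
variable {δ : Ordinal.{u}} (hδ : Order.IsSuccLimit δ)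
include hδ

lemma realize_funcF {α : Type} {f : α} {v : α → (Vset δ).toSet} :
    (funcF f).Realize v ↔
      ∀ x y y' : ZFSet, ZFSet.pair x y ∈ (v f : ZFSet) → ZFSet.pair x y' ∈ (v f : ZFSet) →
        y = y' := by
  rw [funcF, realize_allV]
  constructor
  · intro H x y y' h1 h2
    have hx : x ∈ Vset δ := fst_mem_VD (v f).2 h1
    have hy : y ∈ Vset δ := snd_mem_VD (v f).2 h1
    have hy' : y' ∈ Vset δ := snd_mem_VD (v f).2 h2
    have := H ![⟨x, hx⟩, ⟨y, hy⟩, ⟨y', hy'⟩]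
    rw [Formula.realize_imp, Formula.realize_inf, realize_pairMemF hδ, realize_pairMemF hδ,
      realize_eF] at this
    simpa using this (by simpa using ⟨h1, h2⟩)
  · intro H i
    rw [Formula.realize_imp, Formula.realize_inf, realize_pairMemF hδ, realize_pairMemF hδ,
      realize_eF]
    rintro ⟨h1, h2⟩
    simp only [Sum.elim_inr] at *
    exact H _ _ _ h1 h2

lemma realize_allPairsF {α : Type} {f : α} {v : α → (Vset δ).toSet} :
    (allPairsF f).Realize v ↔
      ∀ p ∈ (v f : ZFSet), ∃ x y : ZFSet, p = ZFSet.pair x y := by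
  rw [allPairsF, realize_allV]
  constructor
  · intro H p hp
    have hpV : p ∈ Vset δ := mem_VD_of_mem (v f).2 hp
    have := H (fun _ => ⟨p, hpV⟩)
    rw [Formula.realize_imp, realize_mF, realize_exV] at this
    obtain ⟨i, hi⟩ := this hp
    rw [realize_pairF hδ] at hi
    exact ⟨_, _, hi⟩
  · intro H i
    rw [Formula.realize_imp, realize_mF, realize_exV]
    intro hp
    obtain ⟨x, y, hxy⟩ := H _ hp
    have hx : x ∈ Vset δ := by
      refine fst_mem_VD (v f).2 (x := x) (y := y) ?_
      rwa [← hxy]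
    have hy : y ∈ Vset δ := by
      refine snd_mem_VD (v f).2 (x := x) (y := y) ?_
      rwa [← hxy]
    refine ⟨![⟨x, hx⟩, ⟨y, hy⟩], ?_⟩
    rw [realize_pairF hδ]
    simpa using hxy

lemma realize_domEqF {α : Type} {f d : α} {v : α → (Vset δ).toSet} :
    (domEqF f d).Realize v ↔
      ∀ x : ZFSet, (∃ b, ZFSet.pair x b ∈ (v f : ZFSet)) ↔ x ∈ (v d : ZFSet) := by
  rw [domEqF, realize_allV]
  constructor
  · intro H x
    constructor
    · rintro ⟨b, hb⟩
      have hx : x ∈ Vset δ := fst_mem_VD (v f).2 hb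
      have := H (fun _ => ⟨x, hx⟩)
      rw [Formula.realize_iff, realize_inDomF hδ, realize_mF] at this
      exact this.1 ⟨b, hb⟩
    · intro hxd
      have hx : x ∈ Vset δ := mem_VD_of_mem (v d).2 hxd
      have := H (fun _ => ⟨x, hx⟩)
      rw [Formula.realize_iff, realize_inDomF hδ, realize_mF] at this
      exact this.2 hxd
  · intro H i
    rw [Formula.realize_iff, realize_inDomF hδ, realize_mF]
    exact H _

lemma realize_transF {α : Type} {d : α} {v : α → (Vset δ).toSet} :
    (transF d).Realize v ↔ IsTransitive (v d : ZFSet) := by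
  rw [transF, realize_allV]
  constructor
  · intro H y hy z hz
    have hyV : y ∈ Vset δ := mem_VD_of_mem (v d).2 hy
    have hzV : z ∈ Vset δ := mem_VD_of_mem hyV hz
    have := H ![⟨y, hyV⟩, ⟨z, hzV⟩]
    rw [Formula.realize_imp, Formula.realize_inf, realize_mF, realize_mF, realize_mF] at this
    simpa using this (by simpa using ⟨hy, hz⟩)
  · intro H i
    rw [Formula.realize_imp, Formula.realize_inf, realize_mF, realize_mF, realize_mF]
    rintro ⟨h1, h2⟩
    simp only [Sum.elim_inr, Sum.elim_inl] at *
    exact H _ h1 h2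

lemma realize_trichF {α : Type} {o : α} {v : α → (Vset δ).toSet} :
    (trichF o).Realize v ↔
      ∀ a ∈ (v o : ZFSet), ∀ b ∈ (v o : ZFSet), a ∈ b ∨ a = b ∨ b ∈ a := by
  rw [trichF, realize_allV]
  constructor
  · intro H a ha b hb
    have haV : a ∈ Vset δ := mem_VD_of_mem (v o).2 ha
    have hbV : b ∈ Vset δ := mem_VD_of_mem (v o).2 hb
    have := H ![⟨a, haV⟩, ⟨b, hbV⟩]
    rw [Formula.realize_imp, Formula.realize_inf, realize_mF, realize_mF,
      Formula.realize_sup, Formula.realize_sup, realize_mF, realize_eF, realize_mF] at this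
    have h2 := this (by simpa using ⟨ha, hb⟩)
    simpa [or_assoc] using h2
  · intro H i
    rw [Formula.realize_imp, Formula.realize_inf, realize_mF, realize_mF,
      Formula.realize_sup, Formula.realize_sup, realize_mF, realize_eF, realize_mF]
    rintro ⟨h1, h2⟩
    simp only [Sum.elim_inr] at *
    rcases H _ h1 _ h2 with h | h | h
    · exact Or.inl (Or.inl h)
    · exact Or.inl (Or.inr h)
    · exact Or.inr h

omit hδ in
lemma ordz_transitive (γ : Ordinal.{u}) : IsTransitive (ordz γ) := by
  intro y hy z hz
  rw [mem_ordz] at hy ⊢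
  obtain ⟨γ', hγ', rfl⟩ := hy
  rw [mem_ordz] at hz
  obtain ⟨γ'', hγ'', rfl⟩ := hz
  exact ⟨γ'', hγ''.trans hγ', rfl⟩

omit hδ in
lemma ordz_trich (γ : Ordinal.{u}) :
    ∀ a ∈ ordz γ, ∀ b ∈ ordz γ, a ∈ b ∨ a = b ∨ b ∈ a := by
  intro a ha b hb
  rw [mem_ordz] at ha hb
  obtain ⟨γ₁, h₁, rfl⟩ := ha
  obtain ⟨γ₂, h₂, rfl⟩ := hb
  rcases lt_trichotomy γ₁ γ₂ with h | h | h
  · exact Or.inl (ordz_mem_ordz h)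
  · exact Or.inr (Or.inl (by rw [h]))
  · exact Or.inr (Or.inr (ordz_mem_ordz h))

lemma realize_ordF {α : Type} {o : α} {v : α → (Vset δ).toSet} :
    (ordF o).Realize v ↔ ∃ γ : Ordinal.{u}, (v o : ZFSet) = ordz γ := by
  rw [ordF, Formula.realize_inf, realize_transF hδ, realize_trichF hδ]
  constructor
  · rintro ⟨h1, h2⟩
    exact ⟨_, eq_ordz_rank h1 h2⟩
  · rintro ⟨γ, hγ⟩
    rw [hγ]
    exact ⟨ordz_transitive γ, ordz_trich γ⟩

lemma realize_fixOrdF {α : Type} {c f : α} {v : α → (Vset δ).toSet} :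
    (fixOrdF c f).Realize v ↔
      ∀ γ : Ordinal.{u}, ordz γ ∈ (v c : ZFSet) →
        (∃ b, ZFSet.pair (ordz γ) b ∈ (v f : ZFSet)) →
        ZFSet.pair (ordz γ) (ordz γ) ∈ (v f : ZFSet) := by
  rw [fixOrdF, realize_allV]
  constructor
  · intro H γ hmem hdom
    have hV : ordz γ ∈ Vset δ := mem_VD_of_mem (v c).2 hmem
    have := H (fun _ => ⟨ordz γ, hV⟩)
    rw [Formula.realize_imp, Formula.realize_inf, Formula.realize_inf, realize_ordF hδ,
      realize_mF, realize_inDomF hδ, realize_pairMemF hδ] at this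
    exact this ⟨⟨⟨γ, rfl⟩, hmem⟩, hdom⟩
  · intro H i
    rw [Formula.realize_imp, Formula.realize_inf, Formula.realize_inf, realize_ordF hδ,
      realize_mF, realize_inDomF hδ, realize_pairMemF hδ]
    rintro ⟨⟨⟨γ, hγ⟩, hmem⟩, hdom⟩
    simp only [Sum.elim_inr, Sum.elim_inl] at *
    rw [hγ] at hmem hdom ⊢
    exact H γ hmem hdom

lemma realize_movesF {α : Type} {c f : α} {v : α → (Vset δ).toSet} :
    (movesF c f).Realize v ↔
      ∃ b, ZFSet.pair (v c : ZFSet) b ∈ (v f : ZFSet) ∧ (v c : ZFSet) ∈ b := by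
  rw [movesF, realize_exV]
  constructor
  · rintro ⟨i, hi⟩
    rw [Formula.realize_inf, realize_pairMemF hδ, realize_mF] at hi
    exact ⟨_, hi.1, hi.2⟩
  · rintro ⟨b, hb, hcb⟩
    have hbV : b ∈ Vset δ := snd_mem_VD (v f).2 hb
    refine ⟨fun _ => ⟨b, hbV⟩, ?_⟩
    rw [Formula.realize_inf, realize_pairMemF hδ, realize_mF]
    exact ⟨hb, hcb⟩

end VD
end EEProof

namespace EEProof
open FirstOrder Language ZFSet

set_option linter.unusedSectionVars false

lemma mem_kpair {z x y : ZFSet.{u}} :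
    z ∈ ZFSet.pair x y ↔ z = ({x} : ZFSet) ∨ z = ({x, y} : ZFSet) := by
  rw [ZFSet.pair]
  simp [ZFSet.mem_insert_iff, ZFSet.mem_singleton]

lemma rank_kpair_le {x y : ZFSet.{u}} :
    (ZFSet.pair x y).rank ≤ Order.succ (Order.succ (max x.rank y.rank)) := by
  rw [ZFSet.rank_le_iff]
  intro z hz
  rcases mem_kpair.1 hz with rfl | rfl
  · rw [ZFSet.rank_singleton]
    exact Order.lt_succ_iff.2 (Order.succ_le_succ (le_max_left _ _))
  · rw [ZFSet.rank_pair]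
    refine Order.lt_succ_iff.2 (max_le ?_ ?_)
    · exact Order.succ_le_succ (le_max_left _ _)
    · exact Order.succ_le_succ (le_max_right _ _)

/-- recursion condition on a stage-function graph `f` -/
def condF {α : Type} (f : α) : Lset.Formula α :=
  allV (γ := Fin 2) ((pairMemF (.inr 0) (.inr 1) (.inl f)).imp
    (allV (γ := Unit) ((mF (.inr ()) (.inl (.inr 1))).iff
      (exV (γ := Fin 2) (
        (mF (.inr 0) (.inl (.inl (.inr 0)))) ⊓
        (pairMemF (.inr 0) (.inr 1) (.inl (.inl (.inl f)))) ⊓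
        (subF (.inl (.inr ())) (.inr 1)))))))

/-- domain of `f` is downward closed -/
def downF {α : Type} (f : α) : Lset.Formula α :=
  allV (γ := Fin 2) ((pairMemF (.inr 0) (.inr 1) (.inl f)).imp
    (allV (γ := Unit) ((mF (.inr ()) (.inl (.inr 0))).imp
      (inDomF (.inr ()) (.inl (.inl f))))))

/-- `w` is the stage indexed by the ordinal `o` -/
def stageAtF {α : Type} (o w : α) : Lset.Formula α :=
  (ordF o) ⊓ exV (γ := Unit)
    ((condF (.inr ()) ⊓ downF (.inr ())) ⊓ pairMemF (.inl o) (.inl w) (.inr ()))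

/-- `w` is a stage of the cumulative hierarchy -/
def stageF {α : Type} (w : α) : Lset.Formula α :=
  exV (γ := Unit) (stageAtF (.inr ()) (.inl w))

/-- semantic counterpart of `condF` -/
def CondP (f : ZFSet.{u}) : Prop :=
  ∀ o w : ZFSet.{u}, ZFSet.pair o w ∈ f →
    ∀ z : ZFSet.{u}, (z ∈ w ↔ ∃ o' w' : ZFSet.{u}, o' ∈ o ∧ ZFSet.pair o' w' ∈ f ∧ z ⊆ w')

/-- semantic counterpart of `downF` -/
def DownP (f : ZFSet.{u}) : Prop :=
  ∀ o w : ZFSet.{u}, ZFSet.pair o w ∈ f →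
    ∀ o' ∈ o, ∃ w', ZFSet.pair o' w' ∈ f

section VD
variable {δ : Ordinal.{u}} (hδ : Order.IsSuccLimit δ)
include hδ

lemma realize_condF {α : Type} {f : α} {v : α → (Vset δ).toSet} :
    (condF f).Realize v ↔ CondP (v f : ZFSet) := by
  rw [condF, realize_allV]
  constructor
  · intro H o w how z
    have hoV : o ∈ Vset δ := fst_mem_VD (v f).2 how
    have hwV : w ∈ Vset δ := snd_mem_VD (v f).2 how
    have := H ![⟨o, hoV⟩, ⟨w, hwV⟩]
    rw [Formula.realize_imp, realize_pairMemF hδ, realize_allV] at this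
    have H2 := this (by simpa using how)
    constructor
    · intro hzw
      have hzV : z ∈ Vset δ := mem_VD_of_mem hwV hzw
      have := H2 (fun _ => ⟨z, hzV⟩)
      rw [Formula.realize_iff, realize_mF, realize_exV] at this
      obtain ⟨i, hi⟩ := this.1 (by simpa using hzw)
      rw [Formula.realize_inf, Formula.realize_inf, realize_mF, realize_pairMemF hδ,
        realize_subF hδ] at hi
      refine ⟨_, _, by simpa using hi.1.1, by simpa using hi.1.2, by simpa using hi.2⟩
    · rintro ⟨o', w', ho', how', hzw'⟩
      have hw'V : w' ∈ Vset δ := snd_mem_VD (v f).2 how'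
      have ho'V : o' ∈ Vset δ := fst_mem_VD (v f).2 how'
      have hzV : z ∈ Vset δ := by
        rw [mem_Vset]
        exact lt_of_le_of_lt (ZFSet.rank_mono hzw') (mem_Vset.1 hw'V)
      have := H2 (fun _ => ⟨z, hzV⟩)
      rw [Formula.realize_iff, realize_mF, realize_exV] at this
      have h3 := this.2 ⟨![⟨o', ho'V⟩, ⟨w', hw'V⟩], by
        rw [Formula.realize_inf, Formula.realize_inf, realize_mF, realize_pairMemF hδ,
          realize_subF hδ]
        exact ⟨⟨by simpa using ho', by simpa using how'⟩, by simpa using hzw'⟩⟩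
      simpa using h3
  · intro H i
    rw [Formula.realize_imp, realize_pairMemF hδ, realize_allV]
    intro how j
    rw [Formula.realize_iff, realize_mF, realize_exV]
    have := H _ _ how (j ())
    constructor
    · intro hz
      obtain ⟨o', w', ho', how', hzw'⟩ := this.1 (by simpa using hz)
      have hw'V : w' ∈ Vset δ := snd_mem_VD (v f).2 how'
      have ho'V : o' ∈ Vset δ := fst_mem_VD (v f).2 how'
      refine ⟨![⟨o', ho'V⟩, ⟨w', hw'V⟩], ?_⟩
      rw [Formula.realize_inf, Formula.realize_inf, realize_mF, realize_pairMemF hδ,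
        realize_subF hδ]
      exact ⟨⟨by simpa using ho', by simpa using how'⟩, by simpa using hzw'⟩
    · rintro ⟨m, hm⟩
      rw [Formula.realize_inf, Formula.realize_inf, realize_mF, realize_pairMemF hδ,
        realize_subF hδ] at hm
      have h3 := this.2 ⟨_, _, by simpa using hm.1.1, by simpa using hm.1.2,
        by simpa using hm.2⟩
      simpa using h3

lemma realize_downF {α : Type} {f : α} {v : α → (Vset δ).toSet} :
    (downF f).Realize v ↔ DownP (v f : ZFSet) := by
  rw [downF, realize_allV]
  constructor
  · intro H o w how o' ho'
    have hoV : o ∈ Vset δ := fst_mem_VD (v f).2 how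
    have hwV : w ∈ Vset δ := snd_mem_VD (v f).2 how
    have := H ![⟨o, hoV⟩, ⟨w, hwV⟩]
    rw [Formula.realize_imp, realize_pairMemF hδ, realize_allV] at this
    have H2 := this (by simpa using how) (fun _ => ⟨o', mem_VD_of_mem hoV ho'⟩)
    rw [Formula.realize_imp, realize_mF, realize_inDomF hδ] at H2
    simpa using H2 (by simpa using ho')
  · intro H i
    rw [Formula.realize_imp, realize_pairMemF hδ, realize_allV]
    intro how j
    rw [Formula.realize_imp, realize_mF, realize_inDomF hδ]
    intro hj
    simpa using H _ _ how _ (by simpa using hj)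

end VD
end EEProof

namespace EEProof
open FirstOrder Language ZFSet

set_option linter.unusedSectionVars false

/-- Any graph satisfying the recursion + downward-closure conditions takes value `Vset γ`
at `ordz γ`. -/
lemma stage_pinned {f : ZFSet.{u}} (hc : CondP f) (hd : DownP f) :
    ∀ γ : Ordinal.{u}, ∀ w : ZFSet.{u}, ZFSet.pair (ordz γ) w ∈ f → w = Vset γ := by
  intro γ
  induction γ using Ordinal.induction with
  | h γ ih =>
    intro w hw
    apply ZFSet.ext
    intro z
    rw [hc _ _ hw z]
    constructor
    · rintro ⟨o', w', ho', how', hzw'⟩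
      rw [mem_ordz] at ho'
      obtain ⟨γ', hγ', rfl⟩ := ho'
      have hw' := ih γ' hγ' w' how'
      subst hw'
      rw [mem_Vset]
      refine lt_of_le_of_lt ?_ hγ'
      rw [ZFSet.rank_le_iff]
      intro t ht
      exact mem_Vset.1 (hzw' ht)
    · intro hz
      have hγ' : z.rank < γ := mem_Vset.1 hz
      obtain ⟨w', how'⟩ := hd _ _ hw (ordz z.rank) (ordz_mem_ordz hγ')
      have := ih z.rank hγ' w' how'
      subst this
      refine ⟨ordz z.rank, Vset z.rank, ordz_mem_ordz hγ', how', ?_⟩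
      intro t ht
      exact mem_Vset.2 (ZFSet.rank_lt_of_mem ht)

/-- The canonical stage-function witness `{⟨ordz γ, Vset γ⟩ : γ ≤ β}`. -/
def stageWit (β : Ordinal.{u}) : ZFSet.{u} :=
  ZFSet.range.{u,u} fun i : (β + 1).ToType =>
    ZFSet.pair (ordz (otypein (β + 1) i)) (Vset (otypein (β + 1) i))

lemma mem_stageWit {β : Ordinal.{u}} {p : ZFSet.{u}} :
    p ∈ stageWit β ↔ ∃ γ ≤ β, p = ZFSet.pair (ordz γ) (Vset γ) := by
  rw [stageWit, ZFSet.mem_range]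
  constructor
  · rintro ⟨i, rfl⟩
    exact ⟨otypein (β + 1) i, Order.lt_succ_iff.1 (by
      have := otypein_lt_self (β + 1) i
      rwa [← Ordinal.add_one_eq_succ]), rfl⟩
  · rintro ⟨γ, hγ, rfl⟩
    obtain ⟨i, hi⟩ := otypein_surj (β := β + 1) (γ := γ)
      (by rw [Ordinal.add_one_eq_succ]; exact Order.lt_succ_iff.2 hγ)
    exact ⟨i, by simp only [hi]⟩

lemma condP_stageWit (β : Ordinal.{u}) : CondP (stageWit β) := by
  intro o w how z
  rw [mem_stageWit] at how
  obtain ⟨γ, hγ, hp⟩ := how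
  obtain ⟨ho, hw⟩ := ZFSet.pair_injective hp
  subst ho; subst hw
  constructor
  · intro hz
    have hr : z.rank < γ := mem_Vset.1 hz
    refine ⟨ordz z.rank, Vset z.rank, ordz_mem_ordz hr,
      mem_stageWit.2 ⟨z.rank, (le_of_lt hr).trans hγ, rfl⟩, ?_⟩
    intro t ht
    exact mem_Vset.2 (ZFSet.rank_lt_of_mem ht)
  · rintro ⟨o', w', ho', how', hzw'⟩
    rw [mem_ordz] at ho'
    obtain ⟨γ', hγ', rfl⟩ := ho'
    rw [mem_stageWit] at how'
    obtain ⟨γ'', _, hp'⟩ := how'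
    obtain ⟨ho'', hw''⟩ := ZFSet.pair_injective hp'
    have : γ' = γ'' := ordz_injective ho''
    subst this
    subst hw''
    rw [mem_Vset]
    refine lt_of_le_of_lt ?_ hγ'
    rw [ZFSet.rank_le_iff]
    intro t ht
    exact mem_Vset.1 (hzw' ht)

lemma downP_stageWit (β : Ordinal.{u}) : DownP (stageWit β) := by
  intro o w how o' ho'
  rw [mem_stageWit] at how
  obtain ⟨γ, hγ, hp⟩ := how
  obtain ⟨ho, _⟩ := ZFSet.pair_injective hp
  subst ho
  rw [mem_ordz] at ho'
  obtain ⟨γ', hγ', rfl⟩ := ho'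
  exact ⟨Vset γ', mem_stageWit.2 ⟨γ', (le_of_lt hγ').trans hγ, rfl⟩⟩

section VD
variable {δ : Ordinal.{u}} (hδ : Order.IsSuccLimit δ)
include hδ

lemma stageWit_mem_VD {β : Ordinal.{u}} (hβ : β < δ) : stageWit β ∈ Vset δ := by
  rw [mem_Vset, stageWit, ZFSet.rank_range]
  refine lt_of_le_of_lt (Ordinal.lsub_le ?_) (hδ.succ_lt (hδ.succ_lt (hδ.succ_lt hβ)))
  intro i
  have hle : otypein (β + 1) i ≤ β := Order.lt_succ_iff.1 (by
    have := otypein_lt_self (β + 1) i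
    rwa [← Ordinal.add_one_eq_succ])
  refine lt_of_le_of_lt rank_kpair_le ?_
  have : max (ordz (otypein (β + 1) i)).rank (Vset (otypein (β + 1) i)).rank ≤ β := by
    rw [rank_ordz, rank_Vset]
    simpa using hle
  calc Order.succ (Order.succ (max (ordz (otypein (β + 1) i)).rank
        (Vset (otypein (β + 1) i)).rank))
      ≤ Order.succ (Order.succ β) := by
        exact Order.succ_le_succ (Order.succ_le_succ this)
    _ < Order.succ (Order.succ (Order.succ β)) := Order.lt_succ _

lemma realize_stageAtF {α : Type} {o w : α} {v : α → (Vset δ).toSet} :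
    (stageAtF o w).Realize v ↔
      ∃ β : Ordinal.{u}, (v o : ZFSet) = ordz β ∧ (v w : ZFSet) = Vset β := by
  rw [stageAtF, Formula.realize_inf, realize_ordF hδ, realize_exV]
  constructor
  · rintro ⟨⟨γ, hγ⟩, i, hi⟩
    rw [Formula.realize_inf, Formula.realize_inf, realize_condF hδ, realize_downF hδ,
      realize_pairMemF hδ] at hi
    obtain ⟨⟨hc, hd⟩, hp⟩ := hi
    refine ⟨γ, hγ, stage_pinned hc hd γ _ (by rwa [← hγ])⟩
  · rintro ⟨β, ho, hw⟩
    have hβ : β < δ := by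
      have := (v o).2
      rw [ZFSet.mem_toSet, ho, ordz_mem_Vset] at this
      exact this
    refine ⟨⟨β, ho⟩, fun _ => ⟨stageWit β, stageWit_mem_VD hδ hβ⟩, ?_⟩
    rw [Formula.realize_inf, Formula.realize_inf, realize_condF hδ, realize_downF hδ,
      realize_pairMemF hδ]
    refine ⟨⟨by simpa using condP_stageWit β, by simpa using downP_stageWit β⟩, ?_⟩
    show ZFSet.pair (v o : ZFSet) (v w : ZFSet) ∈ (stageWit β : ZFSet)
    rw [ho, hw]
    exact mem_stageWit.2 ⟨β, le_refl β, rfl⟩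

lemma realize_stageF {α : Type} {w : α} {v : α → (Vset δ).toSet} :
    (stageF w).Realize v ↔ ∃ β : Ordinal.{u}, (v w : ZFSet) = Vset β := by
  rw [stageF, realize_exV]
  constructor
  · rintro ⟨i, hi⟩
    rw [realize_stageAtF hδ] at hi
    obtain ⟨β, _, hw⟩ := hi
    exact ⟨β, by simpa using hw⟩
  · rintro ⟨β, hw⟩
    have hβ : β < δ := by
      have := (v w).2
      rw [ZFSet.mem_toSet, hw, mem_Vset, rank_Vset] at this
      exact this
    refine ⟨fun _ => ⟨ordz β, ordz_mem_Vset.2 hβ⟩, ?_⟩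
    rw [realize_stageAtF hδ]
    exact ⟨β, rfl, by simpa using hw⟩

end VD
end EEProof

namespace EEProof
open FirstOrder Language ZFSet

set_option linter.unusedSectionVars false

/-- `ψ_φ(f)` : `f` preserves the formula `φ` on its domain. -/
def psiF {α : Type} {n : ℕ} (φ : Lset.Formula (Fin n)) (f : α) : Lset.Formula α :=
  allV (γ := Fin n ⊕ Fin n) ((BoundedFormula.iInf
      (fun i : Fin n => pairMemF (.inr (.inl i)) (.inr (.inr i)) (.inl f))).imp
    ((φ.relabel fun i => Sum.inr (Sum.inl i)).iff (φ.relabel fun i => Sum.inr (Sum.inr i))))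

section VD
variable {δ : Ordinal.{u}} (hδ : Order.IsSuccLimit δ)
include hδ

lemma realize_psiF {α : Type} {n : ℕ} {φ : Lset.Formula (Fin n)} {f : α}
    {v : α → (Vset δ).toSet} :
    (psiF φ f).Realize v ↔
      ∀ x y : Fin n → (Vset δ).toSet,
        (∀ j, ZFSet.pair (x j : ZFSet) (y j : ZFSet) ∈ (v f : ZFSet)) →
        (φ.Realize x ↔ φ.Realize y) := by
  rw [psiF, realize_allV]
  have hiInf : ∀ (w : (α ⊕ (Fin n ⊕ Fin n)) → (Vset δ).toSet),
      (Formula.Realize (BoundedFormula.iInf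
        (fun i : Fin n => pairMemF (.inr (.inl i)) (.inr (.inr i)) (.inl f))) w) ↔
      ∀ j : Fin n, (pairMemF (Sum.inr (Sum.inl j)) (Sum.inr (Sum.inr j)) (Sum.inl f)).Realize w := by
    intro w
    rw [Formula.Realize, BoundedFormula.realize_iInf]
    rfl
  constructor
  · intro H x y hxy
    have := H (Sum.elim x y)
    rw [Formula.realize_imp, Formula.realize_iff, Formula.realize_relabel,
      Formula.realize_relabel, hiInf] at this
    have h2 := this (by
      intro j
      rw [realize_pairMemF hδ]
      simpa using hxy j)
    exact h2
  · intro H i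
    rw [Formula.realize_imp, Formula.realize_iff, Formula.realize_relabel,
      Formula.realize_relabel, hiInf]
    intro hp
    have := H (fun j => i (Sum.inl j)) (fun j => i (Sum.inr j)) (by
      intro j
      have := hp j
      rw [realize_pairMemF hδ] at this
      simpa using this)
    exact this

end VD

/-- Elementarity transfers to formulas over an arbitrary finite variable type. -/
lemma elem_realize_any {A : ZFSet.{u}} {F : A.toSet → A.toSet}
    (hF : ∀ (n : ℕ) (φ : Lset.Formula (Fin n)) (a : Fin n → A.toSet),
      φ.Realize a ↔ φ.Realize (F ∘ a))
    {α : Type} [Fintype α] (ψ : Lset.Formula α) (w : α → A.toSet) :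
    ψ.Realize w ↔ ψ.Realize (F ∘ w) := by
  classical
  let e := Fintype.equivFin α
  have h1 : ∀ (u : α → A.toSet), ψ.Realize u ↔ (ψ.relabel e).Realize (u ∘ e.symm) := by
    intro u
    rw [Formula.realize_relabel]
    have : (u ∘ ⇑e.symm) ∘ ⇑e = u := by
      funext t; simp
    rw [this]
  rw [h1 w, h1 (F ∘ w), hF _ (ψ.relabel e) (w ∘ e.symm)]
  have : F ∘ w ∘ ⇑e.symm = (F ∘ w) ∘ ⇑e.symm := rfl
  rw [this]

end EEProof

namespace EEProof
open FirstOrder Language ZFSet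

set_option linter.unusedSectionVars false

section Emb
variable {δ : Ordinal.{u}} (hδ : Order.IsSuccLimit δ) {j : ZFSet.{u}}
variable {Fj : (Vset δ).toSet → (Vset δ).toSet}
variable (hgr : ∀ p : ZFSet.{u}, p ∈ j ↔ ∃ x : (Vset δ).toSet, p = ZFSet.pair x (Fj x))
variable (hel : ∀ (n : ℕ) (φ : Lset.Formula (Fin n)) (a : Fin n → (Vset δ).toSet),
    φ.Realize a ↔ φ.Realize (Fj ∘ a))

omit hδ in
include hgr in
lemma fval_graph {x : ZFSet.{u}} (hx : x ∈ Vset δ) :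
    fval j x = (Fj ⟨x, hx⟩ : ZFSet) := by
  have hex : ∃ y, ZFSet.pair x y ∈ j := ⟨Fj ⟨x, hx⟩, (hgr _).2 ⟨⟨x, hx⟩, rfl⟩⟩
  rw [fval, dif_pos hex]
  have hsp := hex.choose_spec
  rw [hgr] at hsp
  obtain ⟨x', hp⟩ := hsp
  obtain ⟨h1, h2⟩ := ZFSet.pair_injective hp
  have : x' = ⟨x, hx⟩ := Subtype.ext h1.symm
  rw [h2, this]

omit hδ in
include hgr in
lemma fval_outside {x : ZFSet.{u}} (hx : x ∉ Vset δ) : fval j x = ∅ := by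
  rw [fval, dif_neg]
  rintro ⟨y, hy⟩
  rw [hgr] at hy
  obtain ⟨x', hp⟩ := hy
  obtain ⟨h1, -⟩ := ZFSet.pair_injective hp
  exact hx (h1 ▸ x'.2)

include hel in
lemma mem_F {x y : (Vset δ).toSet} :
    ((x : ZFSet) ∈ (y : ZFSet)) ↔ ((Fj x : ZFSet) ∈ (Fj y : ZFSet)) := by
  have := hel 2 (mF 0 1) ![x, y]
  rw [realize_mF, realize_mF] at this
  simpa using this

include hel in
lemma F_inj {x y : (Vset δ).toSet} (h : Fj x = Fj y) : x = y := by
  have := hel 2 (eF 0 1) ![x, y]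
  rw [realize_eF, realize_eF] at this
  apply Subtype.ext
  have h2 : ((Fj x : ZFSet) = (Fj y : ZFSet)) := by rw [h]
  simpa using this.2 (by simpa using h2)

include hel in
lemma rank_le_F_aux (ρ : Ordinal.{u}) :
    ∀ x : (Vset δ).toSet, (x : ZFSet).rank = ρ → (x : ZFSet).rank ≤ (Fj x : ZFSet).rank := by
  induction ρ using Ordinal.induction with
  | h ρ ih =>
    intro x hx
    rw [ZFSet.rank_le_iff]
    intro y hy
    have hyV : y ∈ Vset δ := mem_VD_of_mem x.2 hy
    have hmem : (Fj ⟨y, hyV⟩ : ZFSet) ∈ (Fj x : ZFSet) := (mem_F hel).1 hy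
    have hr' : y.rank < ρ := hx ▸ ZFSet.rank_lt_of_mem hy
    exact lt_of_le_of_lt (ih _ hr' ⟨y, hyV⟩ rfl) (ZFSet.rank_lt_of_mem hmem)

include hel in
lemma rank_le_F (x : (Vset δ).toSet) : (x : ZFSet).rank ≤ (Fj x : ZFSet).rank :=
  rank_le_F_aux hel _ x rfl

omit hδ in
lemma VsetM {α : Ordinal.{u}} (hα : α < δ) : Vset α ∈ (Vset δ).toSet := by
  rw [ZFSet.mem_toSet, mem_Vset, rank_Vset]; exact hα

include hδ hel in
lemma F_stage {α : Ordinal.{u}} (x : (Vset δ).toSet) (hx : (x : ZFSet) = Vset α) :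
    (Fj x : ZFSet) = Vset ((Fj x : ZFSet).rank) ∧ α ≤ (Fj x : ZFSet).rank := by
  have h1 : (stageF (0 : Fin 1)).Realize ![x] := by
    rw [realize_stageF hδ]
    exact ⟨α, by simpa using hx⟩
  have h2 := (elem_realize_any hel (stageF (0 : Fin 1)) ![x]).1 h1
  rw [realize_stageF hδ] at h2
  obtain ⟨β, hβ⟩ := h2
  have hβ' : (Fj x : ZFSet) = Vset β := by simpa using hβ
  have hrank : (Fj x : ZFSet).rank = β := by rw [hβ', rank_Vset]
  constructor
  · rw [hrank]; exact hβ'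
  · have h3 := rank_le_F hel x
    rw [hx, rank_Vset, hrank] at h3
    rwa [hrank]

end Emb
end EEProof

namespace EEProof
open FirstOrder Language ZFSet

set_option linter.unusedSectionVars false

section Emb
variable {δ : Ordinal.{u}} (hδ : Order.IsSuccLimit δ) {j : ZFSet.{u}}
variable {Fj : (Vset δ).toSet → (Vset δ).toSet}
variable (hgr : ∀ p : ZFSet.{u}, p ∈ j ↔ ∃ x : (Vset δ).toSet, p = ZFSet.pair x (Fj x))
variable (hel : ∀ (n : ℕ) (φ : Lset.Formula (Fin n)) (a : Fin n → (Vset δ).toSet),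
    φ.Realize a ↔ φ.Realize (Fj ∘ a))

include hδ hel in
lemma F_ord {γ : Ordinal.{u}} (x : (Vset δ).toSet) (hx : (x : ZFSet) = ordz γ) :
    (Fj x : ZFSet) = ordz ((Fj x : ZFSet).rank) ∧ γ ≤ (Fj x : ZFSet).rank := by
  have h1 : (ordF (0 : Fin 1)).Realize ![x] := by
    rw [realize_ordF hδ]
    exact ⟨γ, by simpa using hx⟩
  have h2 := (elem_realize_any hel (ordF (0 : Fin 1)) ![x]).1 h1
  rw [realize_ordF hδ] at h2
  obtain ⟨γ', hγ'⟩ := h2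
  have hγ'' : (Fj x : ZFSet) = ordz γ' := by simpa using hγ'
  have hrank : (Fj x : ZFSet).rank = γ' := by rw [hγ'', rank_ordz]
  constructor
  · rw [hrank]; exact hγ''
  · have h3 := rank_le_F hel x
    rw [hx, rank_ordz] at h3
    exact h3

include hδ hel in
lemma F_stageAt {β : Ordinal.{u}} (o w : (Vset δ).toSet)
    (ho : (o : ZFSet) = ordz β) (hw : (w : ZFSet) = Vset β) :
    ∃ β' : Ordinal.{u}, (Fj o : ZFSet) = ordz β' ∧ (Fj w : ZFSet) = Vset β' := by
  have h1 : (stageAtF (0 : Fin 2) (1 : Fin 2)).Realize ![o, w] := by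
    rw [realize_stageAtF hδ]
    exact ⟨β, by simpa using ho, by simpa using hw⟩
  have h2 := (elem_realize_any hel (stageAtF (0 : Fin 2) (1 : Fin 2)) ![o, w]).1 h1
  rw [realize_stageAtF hδ] at h2
  obtain ⟨β', h3, h4⟩ := h2
  exact ⟨β', by simpa using h3, by simpa using h4⟩

include hδ hel in
lemma F_id_of_fix_ords
    (hfix : ∀ γ : Ordinal.{u}, ∀ h : γ < δ,
      (Fj ⟨ordz γ, ordz_mem_Vset.2 h⟩ : ZFSet) = ordz γ) :
    ∀ x : (Vset δ).toSet, Fj x = x := by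
  have hstage : ∀ β : Ordinal.{u}, ∀ h : β < δ, (Fj ⟨Vset β, VsetM h⟩ : ZFSet) = Vset β := by
    intro β h
    obtain ⟨β', h1, h2⟩ := F_stageAt hδ hel (β := β) ⟨ordz β, ordz_mem_Vset.2 h⟩
      ⟨Vset β, VsetM h⟩ rfl rfl
    rw [hfix β h] at h1
    have : β = β' := ordz_injective h1
    rw [h2, ← this]
  suffices haux : ∀ ρ : Ordinal.{u}, ∀ x : (Vset δ).toSet, (x : ZFSet).rank = ρ → Fj x = x by
    intro x; exact haux _ x rfl
  intro ρ
  induction ρ using Ordinal.induction with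
  | h ρ ih =>
    intro x hx
    have hρδ : ρ < δ := by rw [← hx]; exact mem_Vset.1 ((ZFSet.mem_toSet _ _).1 x.2)
    have hρ1 : ρ + 1 < δ := by
      rw [Ordinal.add_one_eq_succ]; exact hδ.succ_lt hρδ
    apply Subtype.ext
    apply ZFSet.ext
    intro z
    have hxV1 : (x : ZFSet) ∈ Vset (ρ + 1) := by
      rw [mem_Vset, hx, Ordinal.add_one_eq_succ]; exact Order.lt_succ ρ
    have hFx : (Fj x : ZFSet) ∈ Vset (ρ + 1) := by
      have hYm : (Fj ⟨Vset (ρ+1), VsetM hρ1⟩ : ZFSet) = Vset (ρ+1) := hstage _ hρ1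
      have := (mem_F hel (x := x) (y := ⟨Vset (ρ+1), VsetM hρ1⟩)).1 (by simpa using hxV1)
      rwa [hYm] at this
    constructor
    · intro hz
      have hzr : z.rank < ρ := by
        have h1 : (Fj x : ZFSet).rank ≤ ρ := by
          have := mem_Vset.1 hFx
          rwa [Ordinal.add_one_eq_succ, Order.lt_succ_iff] at this
        exact lt_of_lt_of_le (ZFSet.rank_lt_of_mem hz) h1
      have hzV : z ∈ Vset δ := mem_VD_of_mem ((ZFSet.mem_toSet _ _).1 (Fj x).2) hz
      have hze : Fj ⟨z, hzV⟩ = ⟨z, hzV⟩ := ih _ hzr ⟨z, hzV⟩ rfl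
      have := (mem_F hel (x := ⟨z, hzV⟩) (y := x)).2 (by rw [hze]; exact hz)
      exact this
    · intro hz
      have hzV : z ∈ Vset δ := mem_VD_of_mem ((ZFSet.mem_toSet _ _).1 x.2) hz
      have hzr : z.rank < ρ := by rw [← hx]; exact ZFSet.rank_lt_of_mem hz
      have hze : Fj ⟨z, hzV⟩ = ⟨z, hzV⟩ := ih _ hzr ⟨z, hzV⟩ rfl
      have := (mem_F hel (x := ⟨z, hzV⟩) (y := x)).1 hz
      rw [hze] at this
      exact this

include hδ hgr hel in
lemma crit_spec (hne : Fj ≠ id) :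
    critE j < δ ∧ ordz (critE j) ∈ fval j (ordz (critE j)) ∧
      ∀ γ < critE j, fval j (ordz γ) = ordz γ := by
  classical
  set P : Set Ordinal.{u} := {γ | γ < δ ∧ fval j (ordz γ) ≠ ordz γ} with hP
  have hPne : P.Nonempty := by
    by_contra hemp
    rw [Set.not_nonempty_iff_eq_empty] at hemp
    have hfix : ∀ γ : Ordinal.{u}, ∀ h : γ < δ,
        (Fj ⟨ordz γ, ordz_mem_Vset.2 h⟩ : ZFSet) = ordz γ := by
      intro γ h
      have : γ ∉ P := by rw [hemp]; exact Set.notMem_empty γ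
      rw [hP] at this
      simp only [Set.mem_setOf_eq, not_and, not_not] at this
      have h2 := this h
      rwa [fval_graph hgr (ordz_mem_Vset.2 h)] at h2
    have := F_id_of_fix_ords hδ hel hfix
    exact hne (funext this)
  set μ := sInf P with hμdef
  have hμP : μ ∈ P := csInf_mem hPne
  have hμδ : μ < δ := hμP.1
  have hfixbelow : ∀ γ < μ, fval j (ordz γ) = ordz γ := by
    intro γ hγ
    by_contra hne'
    have : γ ∈ P := ⟨hγ.trans hμδ, hne'⟩
    exact absurd (csInf_le' this) (not_le_of_gt hγ)
  have hμval : ordz μ ∈ fval j (ordz μ) := by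
    rw [fval_graph hgr (ordz_mem_Vset.2 hμδ)]
    obtain ⟨h1, h2⟩ := F_ord hδ hel (γ := μ) ⟨ordz μ, ordz_mem_Vset.2 hμδ⟩ rfl
    rcases eq_or_lt_of_le h2 with h | h
    · exfalso
      apply hμP.2
      rw [fval_graph hgr (ordz_mem_Vset.2 hμδ), h1, ← h]
    · rw [h1]
      exact ordz_mem_ordz h
  have hleast : IsLeast {γ : Ordinal.{u} | ordz γ ∈ fval j (ordz γ)} μ := by
    constructor
    · exact hμval
    · intro γ hγ
      by_contra hlt
      push_neg at hlt
      have hγδ : γ < δ := hlt.trans hμδ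
      have := hfixbelow γ hlt
      simp only [Set.mem_setOf_eq] at hγ
      rw [this] at hγ
      exact absurd (ZFSet.rank_lt_of_mem hγ) (lt_irrefl _)
  have hcrit : critE j = μ := by
    rw [critE]
    exact hleast.csInf_eq
  rw [hcrit]
  exact ⟨hμδ, hμval, hfixbelow⟩

end Emb
end EEProof

namespace EEProof
open FirstOrder Language ZFSet

set_option linter.unusedSectionVars false

section Two
variable {δ : Ordinal.{u}} (hδ : Order.IsSuccLimit δ) {k l : ZFSet.{u}}
variable {Fk Fl : (Vset δ).toSet → (Vset δ).toSet}
variable (hkgr : ∀ p : ZFSet.{u}, p ∈ k ↔ ∃ x : (Vset δ).toSet, p = ZFSet.pair x (Fk x))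
variable (hkel : ∀ (n : ℕ) (φ : Lset.Formula (Fin n)) (a : Fin n → (Vset δ).toSet),
    φ.Realize a ↔ φ.Realize (Fk ∘ a))
variable (hlgr : ∀ p : ZFSet.{u}, p ∈ l ↔ ∃ x : (Vset δ).toSet, p = ZFSet.pair x (Fl x))
variable (hlel : ∀ (n : ℕ) (φ : Lset.Formula (Fin n)) (a : Fin n → (Vset δ).toSet),
    φ.Realize a ↔ φ.Realize (Fl ∘ a))

include hlgr in
lemma mem_rg {α : Ordinal.{u}} {p : ZFSet.{u}} :
    p ∈ restrictGraph l (Vset α) ↔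
      ∃ x : (Vset δ).toSet, (x : ZFSet).rank < α ∧ p = ZFSet.pair x (Fl x) := by
  rw [restrictGraph, ZFSet.mem_sep]
  constructor
  · rintro ⟨hpl, x', hx', y, hpxy⟩
    rw [hlgr] at hpl
    obtain ⟨x, hp⟩ := hpl
    obtain ⟨h1, -⟩ := ZFSet.pair_injective (hpxy.symm.trans hp)
    refine ⟨x, ?_, hp⟩
    rw [h1] at hx'
    exact mem_Vset.1 hx'
  · rintro ⟨x, hxr, rfl⟩
    exact ⟨(hlgr _).2 ⟨x, rfl⟩, x, mem_Vset.2 hxr, Fl x, rfl⟩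

include hδ hlgr hlel in
lemma rg_mem_VD {α : Ordinal.{u}} (hα : α < δ) :
    restrictGraph l (Vset α) ∈ (Vset δ).toSet := by
  rw [ZFSet.mem_toSet, mem_Vset]
  set xα : (Vset δ).toSet := ⟨Vset α, VsetM hα⟩ with hxα
  set ρ := (Fl xα : ZFSet).rank with hρ
  have hρδ : ρ < δ := mem_Vset.1 ((ZFSet.mem_toSet _ _).1 (Fl xα).2)
  have hc : max α ρ < δ := max_lt hα hρδ
  have hrk : (restrictGraph l (Vset α)).rank ≤ Order.succ (Order.succ (max α ρ)) := by
    rw [ZFSet.rank_le_iff]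
    intro p hp
    obtain ⟨x, hxr, rfl⟩ := (mem_rg hlgr).1 hp
    have h2 : (Fl x : ZFSet).rank < ρ := by
      have hmem : (Fl x : ZFSet) ∈ (Fl xα : ZFSet) := by
        refine (mem_F hlel).1 ?_
        show (x : ZFSet) ∈ (xα : ZFSet)
        rw [hxα]
        exact mem_Vset.2 hxr
      exact ZFSet.rank_lt_of_mem hmem
    have hmax : max (x : ZFSet).rank (Fl x : ZFSet).rank < max α ρ :=
      max_lt (hxr.trans_le (le_max_left _ _)) (h2.trans_le (le_max_right _ _))
    refine lt_of_le_of_lt rank_kpair_le ?_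
    calc Order.succ (Order.succ (max (x : ZFSet).rank (Fl x : ZFSet).rank))
        ≤ Order.succ (max α ρ) := Order.succ_le_succ (Order.succ_le_of_lt hmax)
      _ < Order.succ (Order.succ (max α ρ)) := Order.lt_succ _
  exact lt_of_le_of_lt hrk (hδ.succ_lt (hδ.succ_lt hc))

include hlgr in
lemma rg_sub {α α' : Ordinal.{u}} (h : α ≤ α') :
    restrictGraph l (Vset α) ⊆ restrictGraph l (Vset α') := by
  intro p hp
  obtain ⟨x, hxr, rfl⟩ := (mem_rg hlgr).1 hp
  exact (mem_rg hlgr).2 ⟨x, hxr.trans_le h, rfl⟩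

-- transferred properties of `Fk(l ↾ V_α)`

include hδ hkel hlgr in
lemma T_func {α : Ordinal.{u}} (r : (Vset δ).toSet)
    (hr : (r : ZFSet) = restrictGraph l (Vset α)) :
    ∀ x y y' : ZFSet, ZFSet.pair x y ∈ (Fk r : ZFSet) → ZFSet.pair x y' ∈ (Fk r : ZFSet) →
      y = y' := by
  have h1 : (funcF (0 : Fin 1)).Realize ![r] := by
    rw [realize_funcF hδ]
    intro x y y' hxy hxy'
    simp only [Matrix.cons_val_zero] at hxy hxy'
    rw [hr] at hxy hxy'
    obtain ⟨a, har, hpa⟩ := (mem_rg hlgr).1 hxy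
    obtain ⟨b, hbr, hpb⟩ := (mem_rg hlgr).1 hxy'
    obtain ⟨ha1, ha2⟩ := ZFSet.pair_injective hpa
    obtain ⟨hb1, hb2⟩ := ZFSet.pair_injective hpb
    have : a = b := Subtype.ext (ha1.symm.trans hb1)
    rw [ha2, hb2, this]
  have h2 := (elem_realize_any hkel (funcF (0 : Fin 1)) ![r]).1 h1
  rw [realize_funcF hδ] at h2
  simpa using h2

include hδ hkel hlgr in
lemma T_sub {α α' : Ordinal.{u}} (h : α ≤ α') (r r' : (Vset δ).toSet)
    (hr : (r : ZFSet) = restrictGraph l (Vset α))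
    (hr' : (r' : ZFSet) = restrictGraph l (Vset α')) :
    (Fk r : ZFSet) ⊆ (Fk r' : ZFSet) := by
  have h1 : (subF (0 : Fin 2) (1 : Fin 2)).Realize ![r, r'] := by
    rw [realize_subF hδ]
    simp only [Matrix.cons_val_zero, Matrix.cons_val_one, Matrix.head_cons]
    rw [hr, hr']
    exact rg_sub hlgr h
  have h2 := (elem_realize_any hkel (subF (0 : Fin 2) (1 : Fin 2)) ![r, r']).1 h1
  rw [realize_subF hδ] at h2
  simpa using h2

include hδ hkel hlgr in
lemma T_pairs {α : Ordinal.{u}} (r : (Vset δ).toSet)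
    (hr : (r : ZFSet) = restrictGraph l (Vset α)) :
    ∀ p ∈ (Fk r : ZFSet), ∃ x y : ZFSet, p = ZFSet.pair x y := by
  have h1 : (allPairsF (0 : Fin 1)).Realize ![r] := by
    rw [realize_allPairsF hδ]
    intro p hp
    simp only [Matrix.cons_val_zero] at hp
    rw [hr] at hp
    obtain ⟨x, -, rfl⟩ := (mem_rg hlgr).1 hp
    exact ⟨_, _, rfl⟩
  have h2 := (elem_realize_any hkel (allPairsF (0 : Fin 1)) ![r]).1 h1
  rw [realize_allPairsF hδ] at h2
  simpa using h2

include hδ hkel hlgr in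
lemma T_dom {α : Ordinal.{u}} (hα : α < δ) (r : (Vset δ).toSet)
    (hr : (r : ZFSet) = restrictGraph l (Vset α)) :
    ∀ x : ZFSet, (∃ b, ZFSet.pair x b ∈ (Fk r : ZFSet)) ↔
      x ∈ (Fk ⟨Vset α, VsetM hα⟩ : ZFSet) := by
  have h1 : (domEqF (0 : Fin 2) (1 : Fin 2)).Realize ![r, ⟨Vset α, VsetM hα⟩] := by
    rw [realize_domEqF hδ]
    intro x
    simp only [Matrix.cons_val_zero, Matrix.cons_val_one, Matrix.head_cons]
    rw [hr]
    constructor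
    · rintro ⟨b, hb⟩
      obtain ⟨a, har, hpa⟩ := (mem_rg hlgr).1 hb
      obtain ⟨ha1, -⟩ := ZFSet.pair_injective hpa
      rw [ha1]
      exact mem_Vset.2 har
    · intro hx
      have hxV : x ∈ Vset δ := Vset_mono (le_of_lt hα) hx
      exact ⟨Fl ⟨x, hxV⟩, (mem_rg hlgr).2 ⟨⟨x, hxV⟩, mem_Vset.1 hx, rfl⟩⟩
  have h2 := (elem_realize_any hkel (domEqF (0 : Fin 2) (1 : Fin 2))
    ![r, ⟨Vset α, VsetM hα⟩]).1 h1
  rw [realize_domEqF hδ] at h2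
  simpa using h2

include hδ hkel hlgr hlel in
lemma T_psi {α : Ordinal.{u}} {n : ℕ} (φ : Lset.Formula (Fin n)) (r : (Vset δ).toSet)
    (hr : (r : ZFSet) = restrictGraph l (Vset α)) :
    ∀ x y : Fin n → (Vset δ).toSet,
      (∀ j, ZFSet.pair (x j : ZFSet) (y j : ZFSet) ∈ (Fk r : ZFSet)) →
      (φ.Realize x ↔ φ.Realize y) := by
  have h1 : (psiF φ (0 : Fin 1)).Realize ![r] := by
    rw [realize_psiF hδ]
    intro x y hxy
    have hyx : y = Fl ∘ x := by
      funext j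
      have := hxy j
      simp only [Matrix.cons_val_zero] at this
      rw [hr] at this
      obtain ⟨a, -, hpa⟩ := (mem_rg hlgr).1 this
      obtain ⟨ha1, ha2⟩ := ZFSet.pair_injective hpa
      have hax : a = x j := Subtype.ext ha1.symm
      apply Subtype.ext
      rw [ha2, hax]
      rfl
    rw [hyx]
    exact hlel n φ x
  have h2 := (elem_realize_any hkel (psiF φ (0 : Fin 1)) ![r]).1 h1
  rw [realize_psiF hδ] at h2
  intro x y hxy
  refine h2 x y ?_
  intro j
  simpa using hxy j

include hδ hkel hlgr in
lemma T_pairmem {α : Ordinal.{u}} (r : (Vset δ).toSet)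
    (hr : (r : ZFSet) = restrictGraph l (Vset α)) (x : (Vset δ).toSet)
    (hx : (x : ZFSet).rank < α) :
    ZFSet.pair (Fk x : ZFSet) (Fk (Fl x) : ZFSet) ∈ (Fk r : ZFSet) := by
  have h1 : (pairMemF (0 : Fin 3) (1 : Fin 3) (2 : Fin 3)).Realize ![x, Fl x, r] := by
    rw [realize_pairMemF hδ]
    simp only [Matrix.cons_val_zero, Matrix.cons_val_one, Matrix.head_cons,
      Matrix.cons_val_two, Matrix.tail_cons]
    rw [hr]
    exact (mem_rg hlgr).2 ⟨x, hx, rfl⟩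
  have h2 := (elem_realize_any hkel (pairMemF (0 : Fin 3) (1 : Fin 3) (2 : Fin 3))
    ![x, Fl x, r]).1 h1
  rw [realize_pairMemF hδ] at h2
  simpa using h2

end Two
end EEProof

namespace EEProof
open FirstOrder Language ZFSet

set_option linter.unusedSectionVars false

lemma kpair_in_PP {δ : Ordinal.{u}} {x y : ZFSet.{u}} (hx : x ∈ Vset δ) (hy : y ∈ Vset δ) :
    ZFSet.pair x y ∈ ZFSet.powerset (ZFSet.powerset (Vset δ)) := by
  rw [ZFSet.mem_powerset]
  intro q hq
  rw [ZFSet.mem_powerset]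
  rcases mem_kpair.1 hq with rfl | rfl
  · intro t ht
    rw [ZFSet.mem_singleton] at ht
    rwa [ht]
  · intro t ht
    rcases ZFSet.mem_pair.1 ht with rfl | rfl <;> assumption

section Two
variable {δ : Ordinal.{u}} (hδ : Order.IsSuccLimit δ) {k l : ZFSet.{u}}
variable {Fk Fl : (Vset δ).toSet → (Vset δ).toSet}
variable (hkgr : ∀ p : ZFSet.{u}, p ∈ k ↔ ∃ x : (Vset δ).toSet, p = ZFSet.pair x (Fk x))
variable (hkel : ∀ (n : ℕ) (φ : Lset.Formula (Fin n)) (a : Fin n → (Vset δ).toSet),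
    φ.Realize a ↔ φ.Realize (Fk ∘ a))
variable (hlgr : ∀ p : ZFSet.{u}, p ∈ l ↔ ∃ x : (Vset δ).toSet, p = ZFSet.pair x (Fl x))
variable (hlel : ∀ (n : ℕ) (φ : Lset.Formula (Fin n)) (a : Fin n → (Vset δ).toSet),
    φ.Realize a ↔ φ.Realize (Fl ∘ a))

omit hδ in
lemma mem_appE_iff {p : ZFSet.{u}} :
    p ∈ appE δ k l ↔ ∃ α < δ, p ∈ fval k (restrictGraph l (Vset α)) := by
  rw [appE, ZFSet.mem_sUnion]
  constructor
  · rintro ⟨z, hz, hpz⟩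
    rw [ZFSet.mem_range] at hz
    obtain ⟨i, rfl⟩ := hz
    exact ⟨otypein δ i, otypein_lt_self δ i, hpz⟩
  · rintro ⟨α, hα, hp⟩
    obtain ⟨i, hi⟩ := otypein_surj hα
    refine ⟨_, ZFSet.mem_range.2 ⟨i, rfl⟩, ?_⟩
    show p ∈ fval k (restrictGraph l (Vset (otypein δ i)))
    rw [hi]
    exact hp

include hδ hkgr hlgr hlel in
lemma fval_rg {α : Ordinal.{u}} (hα : α < δ) :
    fval k (restrictGraph l (Vset α)) =
      (Fk ⟨restrictGraph l (Vset α),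
        rg_mem_VD hδ hlgr hlel hα⟩ : ZFSet) :=
  fval_graph hkgr ((ZFSet.mem_toSet _ _).1 (rg_mem_VD hδ hlgr hlel hα))

include hδ hkgr hkel hlgr hlel in
lemma appE_func : ∀ x b b' : ZFSet.{u}, ZFSet.pair x b ∈ appE δ k l →
    ZFSet.pair x b' ∈ appE δ k l → b = b' := by
  intro x b b' hb hb'
  obtain ⟨α, hα, hpα⟩ := mem_appE_iff.1 hb
  obtain ⟨α', hα', hpα'⟩ := mem_appE_iff.1 hb'
  rw [fval_rg hδ hkgr hlgr hlel hα] at hpα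
  rw [fval_rg hδ hkgr hlgr hlel hα'] at hpα'
  rcases le_total α α' with h | h
  · have hsub := T_sub hδ hkel hlgr h
      ⟨restrictGraph l (Vset α), rg_mem_VD hδ hlgr hlel hα⟩
      ⟨restrictGraph l (Vset α'), rg_mem_VD hδ hlgr hlel hα'⟩ rfl rfl
    exact T_func hδ hkel hlgr (α := α')
      ⟨restrictGraph l (Vset α'), rg_mem_VD hδ hlgr hlel hα'⟩ rfl x b b' (hsub hpα) hpα'
  · have hsub := T_sub hδ hkel hlgr h
      ⟨restrictGraph l (Vset α'), rg_mem_VD hδ hlgr hlel hα'⟩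
      ⟨restrictGraph l (Vset α), rg_mem_VD hδ hlgr hlel hα⟩ rfl rfl
    exact T_func hδ hkel hlgr (α := α)
      ⟨restrictGraph l (Vset α), rg_mem_VD hδ hlgr hlel hα⟩ rfl x b b' hpα (hsub hpα')

include hδ hkgr hkel hlgr hlel in
lemma appE_mem_fa {α : Ordinal.{u}} (hα : α < δ) {x b : ZFSet.{u}}
    (hx : x ∈ (Fk ⟨Vset α, VsetM hα⟩ : ZFSet))
    (hb : ZFSet.pair x b ∈ appE δ k l) :
    ZFSet.pair x b ∈
      (Fk ⟨restrictGraph l (Vset α), rg_mem_VD hδ hlgr hlel hα⟩ : ZFSet) := by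
  have hdom := (T_dom hδ hkel hlgr hα
    ⟨restrictGraph l (Vset α), rg_mem_VD hδ hlgr hlel hα⟩ rfl x).2 hx
  obtain ⟨b₂, hb₂⟩ := hdom
  have hb₂' : ZFSet.pair x b₂ ∈ appE δ k l := by
    refine mem_appE_iff.2 ⟨α, hα, ?_⟩
    rw [fval_rg hδ hkgr hlgr hlel hα]
    exact hb₂
  have : b = b₂ := appE_func hδ hkgr hkel hlgr hlel x b b₂ hb hb₂'
  rwa [this]

include hδ hkel in
lemma mem_F_stage {α : Ordinal.{u}} (hα : α < δ) (x : (Vset δ).toSet)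
    (hx : (x : ZFSet).rank < α) :
    (x : ZFSet) ∈ (Fk ⟨Vset α, VsetM hα⟩ : ZFSet) := by
  obtain ⟨hst, hle⟩ := F_stage hδ hkel (α := α) ⟨Vset α, VsetM hα⟩ rfl
  rw [hst, mem_Vset]
  exact lt_of_lt_of_le hx hle

include hδ hkgr hkel hlgr hlel in
lemma exists_pair_appE (x : (Vset δ).toSet) :
    ∃ b : (Vset δ).toSet, ZFSet.pair (x : ZFSet) (b : ZFSet) ∈ appE δ k l := by
  have hxδ : (x : ZFSet).rank < δ := mem_Vset.1 ((ZFSet.mem_toSet _ _).1 x.2)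
  have hα : (x : ZFSet).rank + 1 < δ := by
    rw [Ordinal.add_one_eq_succ]; exact hδ.succ_lt hxδ
  have hx : (x : ZFSet) ∈ (Fk ⟨Vset ((x : ZFSet).rank + 1), VsetM hα⟩ : ZFSet) := by
    refine mem_F_stage hδ hkel hα x ?_
    rw [Ordinal.add_one_eq_succ]; exact Order.lt_succ _
  obtain ⟨b, hb⟩ := (T_dom hδ hkel hlgr hα
    ⟨restrictGraph l (Vset ((x : ZFSet).rank + 1)),
      rg_mem_VD hδ hlgr hlel hα⟩ rfl (x : ZFSet)).2 hx
  have hbV : b ∈ Vset δ :=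
    snd_mem_VD ((ZFSet.mem_toSet _ _).1 (Fk ⟨restrictGraph l _, rg_mem_VD hδ hlgr hlel hα⟩).2) hb
  refine ⟨⟨b, hbV⟩, mem_appE_iff.2 ⟨_, hα, ?_⟩⟩
  rw [fval_rg hδ hkgr hlgr hlel hα]
  exact hb

include hδ hkgr hkel hlgr hlel in
lemma mem_appE_pairs {p : ZFSet.{u}} (hp : p ∈ appE δ k l) :
    ∃ x y : (Vset δ).toSet, p = ZFSet.pair (x : ZFSet) (y : ZFSet) := by
  obtain ⟨α, hα, hpα⟩ := mem_appE_iff.1 hp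
  rw [fval_rg hδ hkgr hlgr hlel hα] at hpα
  obtain ⟨x, y, rfl⟩ := T_pairs hδ hkel hlgr (α := α)
    ⟨restrictGraph l (Vset α), rg_mem_VD hδ hlgr hlel hα⟩ rfl _ hpα
  have hfa := (ZFSet.mem_toSet _ _).1
    (Fk ⟨restrictGraph l (Vset α), rg_mem_VD hδ hlgr hlel hα⟩).2
  exact ⟨⟨x, fst_mem_VD hfa hpα⟩, ⟨y, snd_mem_VD hfa hpα⟩, rfl⟩

include hδ hkgr hkel hlgr hlel in
lemma chain_appE (x : (Vset δ).toSet) :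
    ZFSet.pair (Fk x : ZFSet) (Fk (Fl x) : ZFSet) ∈ appE δ k l := by
  have hxδ : (x : ZFSet).rank < δ := mem_Vset.1 ((ZFSet.mem_toSet _ _).1 x.2)
  have hα : (x : ZFSet).rank + 1 < δ := by
    rw [Ordinal.add_one_eq_succ]; exact hδ.succ_lt hxδ
  refine mem_appE_iff.2 ⟨_, hα, ?_⟩
  rw [fval_rg hδ hkgr hlgr hlel hα]
  refine T_pairmem hδ hkel hlgr
    ⟨restrictGraph l (Vset ((x : ZFSet).rank + 1)), rg_mem_VD hδ hlgr hlel hα⟩ rfl x ?_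
  rw [Ordinal.add_one_eq_succ]; exact Order.lt_succ _

include hδ hkgr hkel hlgr hlel in
lemma appE_in_PPP : appE δ k l ∈
    ZFSet.powerset (ZFSet.powerset (ZFSet.powerset (Vset δ))) := by
  rw [ZFSet.mem_powerset]
  intro p hp
  obtain ⟨x, y, rfl⟩ := mem_appE_pairs hδ hkgr hkel hlgr hlel hp
  exact kpair_in_PP ((ZFSet.mem_toSet _ _).1 x.2) ((ZFSet.mem_toSet _ _).1 y.2)

end Two
end EEProof

namespace EEProof
open FirstOrder Language ZFSet

set_option linter.unusedSectionVars false

section Two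
variable {δ : Ordinal.{u}} (hδ : Order.IsSuccLimit δ) {k l : ZFSet.{u}}
variable {Fk Fl : (Vset δ).toSet → (Vset δ).toSet}
variable (hkgr : ∀ p : ZFSet.{u}, p ∈ k ↔ ∃ x : (Vset δ).toSet, p = ZFSet.pair x (Fk x))
variable (hkel : ∀ (n : ℕ) (φ : Lset.Formula (Fin n)) (a : Fin n → (Vset δ).toSet),
    φ.Realize a ↔ φ.Realize (Fk ∘ a))
variable (hlgr : ∀ p : ZFSet.{u}, p ∈ l ↔ ∃ x : (Vset δ).toSet, p = ZFSet.pair x (Fl x))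
variable (hlel : ∀ (n : ℕ) (φ : Lset.Formula (Fin n)) (a : Fin n → (Vset δ).toSet),
    φ.Realize a ↔ φ.Realize (Fl ∘ a))
variable (hlne : Fl ≠ id)

include hδ hkel hlgr hlel hlne in
lemma T_fix {α : Ordinal.{u}} (r : (Vset δ).toSet)
    (hr : (r : ZFSet) = restrictGraph l (Vset α))
    (c : (Vset δ).toSet) (hc : (c : ZFSet) = ordz (critE l)) :
    ∀ γ : Ordinal.{u}, ordz γ ∈ (Fk c : ZFSet) →
      (∃ b, ZFSet.pair (ordz γ) b ∈ (Fk r : ZFSet)) →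
      ZFSet.pair (ordz γ) (ordz γ) ∈ (Fk r : ZFSet) := by
  have hcl := crit_spec hδ hlgr hlel hlne
  have h1 : (fixOrdF (0 : Fin 2) (1 : Fin 2)).Realize ![c, r] := by
    rw [realize_fixOrdF hδ]
    intro γ hmem hdom
    simp only [Matrix.cons_val_zero, Matrix.cons_val_one, Matrix.head_cons] at hmem hdom ⊢
    rw [hc] at hmem
    rw [hr] at hdom ⊢
    have hγlt : γ < critE l := by
      rw [mem_ordz] at hmem
      obtain ⟨γ'', hγ'', he⟩ := hmem
      rwa [ordz_injective he]
    obtain ⟨b, hb⟩ := hdom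
    obtain ⟨a, har, hpa⟩ := (mem_rg hlgr).1 hb
    obtain ⟨ha1, -⟩ := ZFSet.pair_injective hpa
    have hfix : fval l (ordz γ) = ordz γ := hcl.2.2 γ hγlt
    have hfG : fval l ((a : ZFSet)) = (Fl a : ZFSet) := by
      have := fval_graph hlgr ((ZFSet.mem_toSet _ _).1 a.2)
      simpa using this
    have hFla : (Fl a : ZFSet) = ordz γ := by
      rw [← hfG, ← ha1]
      exact hfix
    have : ZFSet.pair (ordz γ) (ordz γ) = ZFSet.pair (a : ZFSet) (Fl a : ZFSet) := by
      rw [hFla, ← ha1]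
    rw [this]
    exact (mem_rg hlgr).2 ⟨a, har, rfl⟩
  have h2 := (elem_realize_any hkel (fixOrdF (0 : Fin 2) (1 : Fin 2)) ![c, r]).1 h1
  rw [realize_fixOrdF hδ] at h2
  intro γ hmem hdom
  have := h2 γ (by simpa using hmem) (by simpa using hdom)
  simpa using this

include hδ hkel hlgr hlel hlne in
lemma T_moves (c : (Vset δ).toSet) (hc : (c : ZFSet) = ordz (critE l))
    {α : Ordinal.{u}} (hα : α < δ) (hcα : critE l < α)
    (r : (Vset δ).toSet) (hr : (r : ZFSet) = restrictGraph l (Vset α)) :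
    ∃ b, ZFSet.pair (Fk c : ZFSet) b ∈ (Fk r : ZFSet) ∧ (Fk c : ZFSet) ∈ b := by
  have hcl := crit_spec hδ hlgr hlel hlne
  have h1 : (movesF (0 : Fin 2) (1 : Fin 2)).Realize ![c, r] := by
    rw [realize_movesF hδ]
    simp only [Matrix.cons_val_zero, Matrix.cons_val_one, Matrix.head_cons]
    rw [hc, hr]
    refine ⟨(Fl ⟨ordz (critE l), ordz_mem_Vset.2 hcl.1⟩ : ZFSet), ?_, ?_⟩
    · refine (mem_rg hlgr).2 ⟨⟨ordz (critE l), ordz_mem_Vset.2 hcl.1⟩, ?_, ?_⟩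
      · show (ordz (critE l)).rank < α
        rw [rank_ordz]
        exact hcα
      · rfl
    · have := hcl.2.1
      rwa [fval_graph hlgr (ordz_mem_Vset.2 hcl.1)] at this
  have h2 := (elem_realize_any hkel (movesF (0 : Fin 2) (1 : Fin 2)) ![c, r]).1 h1
  rw [realize_movesF hδ] at h2
  obtain ⟨b, hb1, hb2⟩ := h2
  exact ⟨b, by simpa using hb1, by simpa using hb2⟩

end Two
end EEProof

open FirstOrder Language ZFSet EEProof

set_option linter.unusedSectionVars false
set_option linter.unusedVariables false
set_option maxHeartbeats 1000000


/-- For a limit ordinal `δ` and `k, l ∈ E_δ`, the application `k[l]` is in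
`E_δ`, `crit (k[l]) = k (crit l)`, and the critical sequence of `k[l]` is the pointwise image
under `k` of the critical sequence of `l`. -/

theorem application_mem_Eset (δ : Ordinal.{u}) (hδ : Order.IsSuccLimit δ)
    (k l : ZFSet.{u}) (hk : k ∈ Eset δ) (hl : l ∈ Eset δ) :
    appE δ k l ∈ Eset δ ∧
    ordz (critE (appE δ k l)) = fval k (ordz (critE l)) ∧
    ∀ n : ℕ, critSeqE (appE δ k l) n = fval k (critSeqE l n) := by
  classical
  rw [Eset, ZFSet.mem_sep] at hk hl
  obtain ⟨hkP, Fk, hkgr, hkel, hkne⟩ := hk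
  obtain ⟨hlP, Fl, hlgr, hlel, hlne⟩ := hl
  -- the function coded by appE δ k l
  choose G hG using exists_pair_appE hδ hkgr hkel hlgr hlel
  -- graph characterization
  have hGgr : ∀ p : ZFSet.{u}, p ∈ appE δ k l ↔
      ∃ x : (Vset δ).toSet, p = ZFSet.pair (x : ZFSet) (G x : ZFSet) := by
    intro p
    constructor
    · intro hp
      obtain ⟨x, y, rfl⟩ := mem_appE_pairs hδ hkgr hkel hlgr hlel hp
      have : (y : ZFSet) = (G x : ZFSet) :=
        appE_func hδ hkgr hkel hlgr hlel (x : ZFSet) _ _ hp (hG x)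
      exact ⟨x, by rw [this]⟩
    · rintro ⟨x, rfl⟩
      exact hG x
  -- convenient fval computations
  have hfvalK : ∀ x : (Vset δ).toSet, fval k (x : ZFSet) = (Fk x : ZFSet) := by
    intro x
    exact fval_graph hkgr ((ZFSet.mem_toSet _ _).1 x.2)
  have hfvalL : ∀ x : (Vset δ).toSet, fval l (x : ZFSet) = (Fl x : ZFSet) := by
    intro x
    exact fval_graph hlgr ((ZFSet.mem_toSet _ _).1 x.2)
  have hfvalG : ∀ x : (Vset δ).toSet, fval (appE δ k l) (x : ZFSet) = (G x : ZFSet) := by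
    intro x
    exact fval_graph hGgr ((ZFSet.mem_toSet _ _).1 x.2)
  -- pair ⟨x, G x⟩ lies in the α-th approximation when x is in its domain
  have hGfa : ∀ {α : Ordinal.{u}} (hα : α < δ) (x : (Vset δ).toSet),
      (x : ZFSet) ∈ (Fk ⟨Vset α, VsetM hα⟩ : ZFSet) →
      ZFSet.pair (x : ZFSet) (G x : ZFSet) ∈
        (Fk ⟨restrictGraph l (Vset α), rg_mem_VD hδ hlgr hlel hα⟩ : ZFSet) := by
    intro α hα x hx
    exact appE_mem_fa hδ hkgr hkel hlgr hlel hα hx (hG x)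
  -- the chain rule G (Fk x) = Fk (Fl x)
  have hchain : ∀ x : (Vset δ).toSet, G (Fk x) = Fk (Fl x) := by
    intro x
    apply Subtype.ext
    exact appE_func hδ hkgr hkel hlgr hlel (Fk x : ZFSet) _ _ (hG (Fk x))
      (chain_appE hδ hkgr hkel hlgr hlel x)
  -- elementarity of G
  have hGel : ∀ (n : ℕ) (φ : Lset.Formula (Fin n)) (a : Fin n → (Vset δ).toSet),
      φ.Realize a ↔ φ.Realize (G ∘ a) := by
    intro n φ a
    set α : Ordinal.{u} := (Finset.univ.sup fun i => ((a i : ZFSet)).rank) + 1 with hαdef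
    have hα : α < δ := by
      rw [hαdef, Ordinal.add_one_eq_succ]
      refine hδ.succ_lt ?_
      rw [Finset.sup_lt_iff (show (⊥ : Ordinal.{u}) < δ from hδ.pos)]
      intro i _
      exact mem_Vset.1 ((ZFSet.mem_toSet _ _).1 (a i).2)
    have hpair : ∀ i, ZFSet.pair ((a i : ZFSet)) ((G (a i) : ZFSet)) ∈
        (Fk ⟨restrictGraph l (Vset α), rg_mem_VD hδ hlgr hlel hα⟩ : ZFSet) := by
      intro i
      refine hGfa hα (a i) (mem_F_stage hδ hkel hα (a i) ?_)
      rw [hαdef, Ordinal.add_one_eq_succ, Order.lt_succ_iff]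
      exact Finset.le_sup (f := fun i => ((a i : ZFSet)).rank) (Finset.mem_univ i)
    exact T_psi hδ hkel hlgr hlel φ
      ⟨restrictGraph l (Vset α), rg_mem_VD hδ hlgr hlel hα⟩ rfl a (G ∘ a) hpair
  -- nontriviality of G
  have hGne : G ≠ id := by
    intro hid
    apply hlne
    funext x
    have h1 : G (Fk x) = Fk (Fl x) := hchain x
    rw [hid] at h1
    exact F_inj hkel h1.symm
  -- membership in Eset
  have hmemE : appE δ k l ∈ Eset δ := by
    rw [Eset, ZFSet.mem_sep]
    exact ⟨appE_in_PPP hδ hkgr hkel hlgr hlel, G, hGgr, hGel, hGne⟩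
  -- critical point facts for l
  have hcl := crit_spec hδ hlgr hlel hlne
  have hcV : ordz (critE l) ∈ Vset δ := ordz_mem_Vset.2 hcl.1
  set c : (Vset δ).toSet := ⟨ordz (critE l), hcV⟩ with hcdef
  obtain ⟨hFkc, hcle⟩ := F_ord hδ hkel (γ := critE l) c rfl
  set κ : Ordinal.{u} := ((Fk c : ZFSet)).rank with hκdef
  have hκδ : κ < δ := mem_Vset.1 ((ZFSet.mem_toSet _ _).1 (Fk c).2)
  -- κ is moved upward by G
  have hκmoved : ∀ hm : ordz κ ∈ Vset δ, ordz κ ∈ (G ⟨ordz κ, hm⟩ : ZFSet) := by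
    intro hm
    have hα : critE l + 1 < δ := by
      rw [Ordinal.add_one_eq_succ]; exact hδ.succ_lt hcl.1
    obtain ⟨b, hb1, hb2⟩ := T_moves hδ hkel hlgr hlel hlne c rfl hα
      (by rw [Ordinal.add_one_eq_succ]; exact Order.lt_succ _)
      ⟨restrictGraph l (Vset (critE l + 1)), rg_mem_VD hδ hlgr hlel hα⟩ rfl
    have hbapp : ZFSet.pair (Fk c : ZFSet) b ∈ appE δ k l := by
      refine mem_appE_iff.2 ⟨_, hα, ?_⟩
      rw [fval_rg hδ hkgr hlgr hlel hα]
      exact hb1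
    have hbeq : b = (G (Fk c) : ZFSet) :=
      appE_func hδ hkgr hkel hlgr hlel (Fk c : ZFSet) _ _ hbapp (hG (Fk c))
    have hsub : (⟨ordz κ, hm⟩ : (Vset δ).toSet) = Fk c := Subtype.ext hFkc.symm
    rw [hsub, ← hFkc]
    rw [hbeq] at hb2
    exact hb2
  -- G fixes all ordinals below κ
  have hκfix : ∀ γ : Ordinal.{u}, γ < κ → ∀ hm : ordz γ ∈ Vset δ,
      (G ⟨ordz γ, hm⟩ : ZFSet) = ordz γ := by
    intro γ hγ hm
    have hγδ : γ < δ := hγ.trans hκδ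
    have hα : γ + 1 < δ := by
      rw [Ordinal.add_one_eq_succ]; exact hδ.succ_lt hγδ
    have hxmem : ((⟨ordz γ, hm⟩ : (Vset δ).toSet) : ZFSet) ∈
        (Fk ⟨Vset (γ + 1), VsetM hα⟩ : ZFSet) := by
      refine mem_F_stage hδ hkel hα _ ?_
      show (ordz γ).rank < γ + 1
      rw [rank_ordz, Ordinal.add_one_eq_succ]
      exact Order.lt_succ _
    have hdom : ∃ b, ZFSet.pair (ordz γ) b ∈
        (Fk ⟨restrictGraph l (Vset (γ + 1)), rg_mem_VD hδ hlgr hlel hα⟩ : ZFSet) :=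
      ⟨(G ⟨ordz γ, hm⟩ : ZFSet), hGfa hα ⟨ordz γ, hm⟩ hxmem⟩
    have hfixp := T_fix hδ hkel hlgr hlel hlne
      ⟨restrictGraph l (Vset (γ + 1)), rg_mem_VD hδ hlgr hlel hα⟩ rfl c rfl γ
      (by rw [hFkc]; exact ordz_mem_ordz hγ) hdom
    have happ : ZFSet.pair (ordz γ) (ordz γ) ∈ appE δ k l := by
      refine mem_appE_iff.2 ⟨_, hα, ?_⟩
      rw [fval_rg hδ hkgr hlgr hlel hα]
      exact hfixp
    exact appE_func hδ hkgr hkel hlgr hlel (ordz γ) _ _ (hG ⟨ordz γ, hm⟩) happ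
  -- identification of the critical point of appE
  have hleast : IsLeast {γ : Ordinal.{u} | ordz γ ∈ fval (appE δ k l) (ordz γ)} κ := by
    constructor
    · show ordz κ ∈ fval (appE δ k l) (ordz κ)
      rw [fval_graph hGgr (ordz_mem_Vset.2 hκδ)]
      exact hκmoved (ordz_mem_Vset.2 hκδ)
    · intro γ hγ
      by_contra hcon
      push_neg at hcon
      have hγδ : γ < δ := hcon.trans hκδ
      simp only [Set.mem_setOf_eq] at hγ
      rw [fval_graph hGgr (ordz_mem_Vset.2 hγδ)] at hγ
      rw [hκfix γ hcon (ordz_mem_Vset.2 hγδ)] at hγ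
      exact absurd (ZFSet.rank_lt_of_mem hγ) (lt_irrefl _)
  have hcritG : critE (appE δ k l) = κ := by
    rw [critE]
    exact hleast.csInf_eq
  have hpartb : ordz (critE (appE δ k l)) = fval k (ordz (critE l)) := by
    rw [hcritG]
    have : fval k (ordz (critE l)) = (Fk c : ZFSet) := hfvalK c
    rw [this, hFkc]
  refine ⟨hmemE, hpartb, ?_⟩
  -- part (c)
  have hVl : ∀ n : ℕ, critSeqE l n ∈ Vset δ := by
    intro n
    induction n with
    | zero => exact hcV
    | succ n ih =>
      show fval l (critSeqE l n) ∈ Vset δ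
      rw [fval_graph hlgr ih]
      exact (ZFSet.mem_toSet _ _).1 (Fl _).2
  intro n
  induction n with
  | zero => exact hpartb
  | succ n ih =>
    show fval (appE δ k l) (critSeqE (appE δ k l) n) = fval k (critSeqE l (n + 1))
    rw [ih]
    have e1 : fval k (critSeqE l n) = (Fk ⟨critSeqE l n, hVl n⟩ : ZFSet) :=
      hfvalK ⟨critSeqE l n, hVl n⟩
    rw [e1, hfvalG (Fk ⟨critSeqE l n, hVl n⟩), hchain ⟨critSeqE l n, hVl n⟩]
    rw [← hfvalK (Fl ⟨critSeqE l n, hVl n⟩)]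
    have e2 : critSeqE l (n + 1) = fval l (critSeqE l n) := rfl
    rw [e2, hfvalL ⟨critSeqE l n, hVl n⟩]
end
end
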